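/- arXiv:2110.15576 — 6 statements merged into one kernel-verified Lean document; each statement's English description precedes it below -/
import Mathlib

section
/- For γ < 1 and k ∈ {0,1,2}, if M is GEV-distributed with parameters (μ, σ, γ), then the probability weighted moment β_{θ,k} = E[M · G_{(μ,σ,γ)}(M)^k] equals (1/(k+1))·[μ - (σ/γ)·(1 - (k+1)^γ Γ(1-γ))], where for γ = 0 this is interpreted by continuity (as the limit), giving (1/(k+1))[μ + σ(log(k+1) + γ_EM)] with γ_EM the Euler–Mascheroni constant. -/
open MeasureTheory ProbabilityTheory Real

/-- The GEV cdf with location `μ`, scale `σ`, shape `γ`, extended to all of `ℝ`. For `γ = 0`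
it is the Gumbel cdf `exp (-exp (-(x-μ)/σ))`; otherwise it is `exp (-(1+γ(x-μ)/σ)^(-1/γ))`
on the support, extended by 0 below the support (γ > 0) and by 1 above it (γ < 0). -/
noncomputable def gevCdf3 (μ σ γ x : ℝ) : ℝ :=
  if γ = 0 then Real.exp (-Real.exp (-((x - μ) / σ)))
  else if 1 + γ * ((x - μ) / σ) > 0 then Real.exp (-(1 + γ * ((x - μ) / σ)) ^ (-1 / γ))
  else if γ > 0 then 0 else 1

open Set in
/-- The GEV quantile function. -/
noncomputable def gevQ (μ σ γ u : ℝ) : ℝ :=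
  if γ = 0 then μ - σ * Real.log (-Real.log u)
  else μ + (σ / γ) * ((-Real.log u) ^ (-γ) - 1)

lemma measurable_gevCdf3 (μ σ γ : ℝ) : Measurable (gevCdf3 μ σ γ) := by
  unfold gevCdf3
  by_cases h : γ = 0
  · simp only [h, if_true]; measurability
  · simp only [h, if_false]
    refine Measurable.ite (measurableSet_lt measurable_const (by measurability)) ?_
      measurable_const
    measurability

lemma measurable_gevQ (μ σ γ : ℝ) : Measurable (gevQ μ σ γ) := by
  unfold gevQ
  by_cases h : γ = 0
  · simp only [h, if_true]; measurability
  · simp only [h, if_false]; measurability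

lemma gevCdf3_nonneg (μ σ γ x : ℝ) : 0 ≤ gevCdf3 μ σ γ x := by
  unfold gevCdf3
  split_ifs <;> positivity

lemma gevCdf3_le_one (μ σ γ x : ℝ) : gevCdf3 μ σ γ x ≤ 1 := by
  unfold gevCdf3
  split_ifs with h1 h2 h3
  · rw [Real.exp_le_one_iff]
    simp [Real.exp_nonneg]
  · rw [Real.exp_le_one_iff, neg_nonpos]
    positivity
  · norm_num
  · norm_num

open Set in
lemma gevQ_le_iff (μ σ γ : ℝ) (hσ : 0 < σ) {u : ℝ} (hu : u ∈ Ioo (0:ℝ) 1) (x : ℝ) :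
    gevQ μ σ γ u ≤ x ↔ u ≤ gevCdf3 μ σ γ x := by
  obtain ⟨hu0, hu1⟩ := hu
  have hlogu : Real.log u < 0 := Real.log_neg hu0 hu1
  set t : ℝ := -Real.log u with ht_def
  have ht : 0 < t := by simp only [ht_def]; linarith
  have hlogu_t : Real.log u = -t := by rw [ht_def]; ring
  by_cases hγ0 : γ = 0
  · simp only [gevQ, gevCdf3, hγ0, if_true]
    have key : μ - σ * Real.log t ≤ x ↔ -((x - μ) / σ) ≤ Real.log t := by
      rw [neg_le, le_div_iff₀ hσ]
      constructor <;> intro h <;> nlinarith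
    rw [key, Real.le_log_iff_exp_le ht, ← Real.log_le_iff_le_exp hu0, hlogu_t]
    constructor <;> intro h <;> linarith
  · simp only [gevQ, gevCdf3, hγ0, if_false]
    set T := t ^ (-γ) with hT_def
    have hT : 0 < T := Real.rpow_pos_of_pos ht _
    set c := 1 + γ * ((x - μ) / σ) with hc_def
    rcases lt_or_gt_of_ne hγ0 with hγneg | hγpos
    · -- γ < 0
      have hσγ : σ / γ < 0 := div_neg_of_pos_of_neg hσ hγneg
      have hid : (σ / γ) * (γ * ((x - μ) / σ)) = x - μ := by field_simp
      have step1 : μ + (σ / γ) * (T - 1) ≤ x ↔ c ≤ T := by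
        rw [hc_def]
        constructor
        · intro h
          have h2 : (σ / γ) * (T - 1) ≤ (σ / γ) * (γ * ((x - μ) / σ)) := by rw [hid]; linarith
          have h3 := (mul_le_mul_left_of_neg hσγ).mp h2
          linarith
        · intro h
          have h3 : (σ / γ) * (T - 1) ≤ (σ / γ) * (γ * ((x - μ) / σ)) :=
            (mul_le_mul_left_of_neg hσγ).mpr (by linarith)
          rw [hid] at h3; linarith
      have hng : 0 < -γ := by linarith
      by_cases hc : 0 < c
      · rw [if_pos hc, step1, ← Real.log_le_iff_le_exp hu0, hlogu_t]
        have hcp : 0 < c ^ (-1/γ) := Real.rpow_pos_of_pos hc _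
        constructor
        · intro h
          have l1 : Real.log c ≤ Real.log T := (Real.log_le_log_iff hc hT).mpr h
          rw [hT_def, Real.log_rpow ht] at l1
          have l2 : (-1/γ) * Real.log c ≤ Real.log t := by
            rw [show (-1/γ) * Real.log c = Real.log c / (-γ) by field_simp,
              div_le_iff₀ hng]
            nlinarith
          have l3 : c ^ (-1/γ) ≤ t :=
            (Real.log_le_log_iff hcp ht).mp (by rw [Real.log_rpow hc]; exact l2)
          linarith
        · intro h
          have hlt : c ^ (-1/γ) ≤ t := by linarith
          have l2 : (-1/γ) * Real.log c ≤ Real.log t := by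
            rw [← Real.log_rpow hc]; exact (Real.log_le_log_iff hcp ht).mpr hlt
          have l1 : Real.log c ≤ -γ * Real.log t := by
            rw [show (-1/γ) * Real.log c = Real.log c / (-γ) by field_simp,
              div_le_iff₀ hng] at l2
            nlinarith
          have : Real.log c ≤ Real.log T := by rw [hT_def, Real.log_rpow ht]; exact l1
          exact (Real.log_le_log_iff hc hT).mp this
      · rw [if_neg hc, if_neg (not_lt.mpr hγneg.le)]
        have hcle : c ≤ 0 := not_lt.mp hc
        constructor <;> intro _
        · exact hu1.le
        · rw [step1]; linarith
    · -- γ > 0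
      have hσγ : 0 < σ / γ := div_pos hσ hγpos
      have hid : (σ / γ) * (γ * ((x - μ) / σ)) = x - μ := by field_simp
      have step1 : μ + (σ / γ) * (T - 1) ≤ x ↔ T ≤ c := by
        rw [hc_def]
        constructor
        · intro h
          have h2 : (σ / γ) * (T - 1) ≤ (σ / γ) * (γ * ((x - μ) / σ)) := by rw [hid]; linarith
          have h3 := (mul_le_mul_iff_right₀ hσγ).mp h2
          linarith
        · intro h
          have h3 : (σ / γ) * (T - 1) ≤ (σ / γ) * (γ * ((x - μ) / σ)) :=
            (mul_le_mul_iff_right₀ hσγ).mpr (by linarith)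
          rw [hid] at h3; linarith
      by_cases hc : 0 < c
      · rw [if_pos hc, step1, ← Real.log_le_iff_le_exp hu0, hlogu_t]
        have hcp : 0 < c ^ (-1/γ) := Real.rpow_pos_of_pos hc _
        constructor
        · intro h
          have l1 : Real.log T ≤ Real.log c := (Real.log_le_log_iff hT hc).mpr h
          rw [hT_def, Real.log_rpow ht] at l1
          have l2 : (-1/γ) * Real.log c ≤ Real.log t := by
            rw [show (-1/γ) * Real.log c = -(Real.log c / γ) by field_simp,
              neg_le, le_div_iff₀ hγpos]
            nlinarith
          have l3 : c ^ (-1/γ) ≤ t :=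
            (Real.log_le_log_iff hcp ht).mp (by rw [Real.log_rpow hc]; exact l2)
          linarith
        · intro h
          have hlt : c ^ (-1/γ) ≤ t := by linarith
          have l2 : (-1/γ) * Real.log c ≤ Real.log t := by
            rw [← Real.log_rpow hc]; exact (Real.log_le_log_iff hcp ht).mpr hlt
          have l1 : -γ * Real.log t ≤ Real.log c := by
            rw [show (-1/γ) * Real.log c = -(Real.log c / γ) by field_simp,
              neg_le, le_div_iff₀ hγpos] at l2
            nlinarith
          have : Real.log T ≤ Real.log c := by rw [hT_def, Real.log_rpow ht]; exact l1
          exact (Real.log_le_log_iff hT hc).mp this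
      · rw [if_neg hc, if_pos hγpos]
        have hcle : c ≤ 0 := not_lt.mp hc
        constructor <;> intro h
        · rw [step1] at h; linarith
        · linarith

open Set in
lemma gevCdf3_gevQ (μ σ γ : ℝ) (hσ : 0 < σ) {u : ℝ}
    (hu : u ∈ Ioo (0:ℝ) 1) : gevCdf3 μ σ γ (gevQ μ σ γ u) = u := by
  obtain ⟨hu0, hu1⟩ := hu
  have hlogu : Real.log u < 0 := Real.log_neg hu0 hu1
  set t : ℝ := -Real.log u with ht_def
  have ht : 0 < t := by simp only [ht_def]; linarith
  by_cases h : γ = 0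
  · simp only [gevQ, gevCdf3, h, if_true]
    have : -((μ - σ * Real.log t - μ) / σ) = Real.log t := by field_simp; ring
    rw [this, Real.exp_log ht, ht_def]
    simp [Real.exp_log hu0]
  · simp only [gevQ, gevCdf3, h, if_false]
    have harg : 1 + γ * ((μ + σ / γ * (t ^ (-γ) - 1) - μ) / σ) = t ^ (-γ) := by
      field_simp
      ring
    rw [harg]
    have hT : (0:ℝ) < t ^ (-γ) := Real.rpow_pos_of_pos ht _
    rw [if_pos hT]
    have hpow : (t ^ (-γ)) ^ (-1/γ) = t := by
      rw [← Real.rpow_mul ht.le, show -γ * (-1/γ) = 1 by field_simp, Real.rpow_one]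
    rw [hpow, ht_def]
    simp [Real.exp_log hu0]

open Set in
lemma gev_volume_Iic (μ σ γ : ℝ) (hσ : 0 < σ) (x : ℝ) :
    (volume.restrict (Ioo (0:ℝ) 1)).map (gevQ μ σ γ) (Set.Iic x)
      = ENNReal.ofReal (gevCdf3 μ σ γ x) := by
  rw [Measure.map_apply (measurable_gevQ μ σ γ) measurableSet_Iic,
    Measure.restrict_apply ((measurable_gevQ μ σ γ) measurableSet_Iic)]
  have hset : gevQ μ σ γ ⁻¹' (Iic x) ∩ Ioo 0 1 = Iic (gevCdf3 μ σ γ x) ∩ Ioo 0 1 := by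
    ext u
    simp only [mem_inter_iff, mem_preimage, mem_Iic, mem_Ioo, and_congr_left_iff]
    intro h1
    exact gevQ_le_iff μ σ γ hσ h1 x
  rw [hset]
  have h0 := gevCdf3_nonneg μ σ γ x
  have h1 := gevCdf3_le_one μ σ γ x
  set c := gevCdf3 μ σ γ x with hc
  rcases lt_or_ge c 1 with hcc | hcc
  · have : Iic c ∩ Ioo 0 1 = Ioc 0 c := by
      ext u
      simp only [mem_inter_iff, mem_Iic, mem_Ioo, mem_Ioc]
      constructor
      · rintro ⟨h2, h3, h4⟩; exact ⟨h3, h2⟩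
      · rintro ⟨h3, h2⟩; exact ⟨h2, h3, lt_of_le_of_lt h2 hcc⟩
    rw [this, Real.volume_Ioc]
    simp
  · have hc1 : c = 1 := le_antisymm h1 hcc
    have : Iic c ∩ Ioo 0 1 = Ioo 0 1 := by
      rw [hc1]
      ext u
      simp only [mem_inter_iff, mem_Iic, mem_Ioo]
      exact ⟨fun h => h.2, fun h => ⟨h.2.le, h⟩⟩
    rw [this, Real.volume_Ioo, hc1]
    simp

lemma gev_map_eq {Ω : Type*} [MeasureSpace Ω] [IsProbabilityMeasure (ℙ : Measure Ω)]
    (μ σ γ : ℝ) (hσ : 0 < σ) (M : Ω → ℝ) (hM : Measurable M)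
    (hcdf : ∀ x : ℝ, ℙ {ω | M ω ≤ x} = ENNReal.ofReal (gevCdf3 μ σ γ x)) :
    (ℙ : Measure Ω).map M = (volume.restrict (Set.Ioo (0:ℝ) 1)).map (gevQ μ σ γ) := by
  haveI : IsProbabilityMeasure ((ℙ : Measure Ω).map M) :=
    Measure.isProbabilityMeasure_map hM.aemeasurable
  refine Measure.ext_of_Iic _ _ (fun a => ?_)
  rw [Measure.map_apply hM measurableSet_Iic, gev_volume_Iic μ σ γ hσ a]
  exact hcdf a

lemma integral_log_mul_exp_neg :
    ∫ t in Set.Ioi (0:ℝ), Real.log t * Real.exp (-t) = -Real.eulerMascheroniConstant := by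
  have hd := Complex.hasDerivAt_GammaIntegral (s := 1) (by norm_num)
  have hint : (∫ t : ℝ in Set.Ioi 0, (t:ℂ) ^ ((1:ℂ) - 1) * (Real.log t * Real.exp (-t)))
      = ((∫ t in Set.Ioi (0:ℝ), Real.log t * Real.exp (-t) : ℝ) : ℂ) := by
    have e1 : (∫ t : ℝ in Set.Ioi 0, (t:ℂ) ^ ((1:ℂ) - 1) * (Real.log t * Real.exp (-t)))
        = ∫ t in Set.Ioi (0:ℝ), ((Real.log t * Real.exp (-t) : ℝ) : ℂ) := by
      refine setIntegral_congr_fun measurableSet_Ioi (fun t ht => ?_)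
      rw [sub_self, Complex.cpow_zero, one_mul]
      push_cast
      ring
    rw [e1]
    exact integral_ofReal
  rw [hint] at hd
  have hev : Complex.Gamma =ᶠ[nhds (1:ℂ)] Complex.GammaIntegral := by
    filter_upwards [IsOpen.mem_nhds (isOpen_lt continuous_const Complex.continuous_re)
      (by norm_num : (0:ℝ) < (1:ℂ).re)] with s hs
    exact Complex.Gamma_eq_integral hs
  have hd2 := hd.congr_of_eventuallyEq hev
  have huniq := hd2.unique Complex.hasDerivAt_Gamma_one
  exact_mod_cast huniq

lemma integrableOn_exp_neg_mul {l : ℝ} (hl : 0 < l) :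
    MeasureTheory.IntegrableOn (fun t : ℝ => Real.exp (-(l * t))) (Set.Ioi 0) := by
  simpa [neg_mul] using exp_neg_integrableOn_Ioi 0 hl

lemma integrableOn_rpow_mul_exp_neg_mul {s l : ℝ} (hs : -1 < s) (hl : 0 < l) :
    MeasureTheory.IntegrableOn (fun t : ℝ => t ^ s * Real.exp (-(l * t))) (Set.Ioi 0) := by
  have := integrableOn_rpow_mul_exp_neg_mul_rpow hs (one_pos : (0:ℝ) < 1) hl
  simp only [Real.rpow_one, neg_mul] at this
  simpa [neg_mul] using this

lemma integrableOn_log_mul_exp_neg_mul {l : ℝ} (hl : 0 < l) :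
    MeasureTheory.IntegrableOn (fun t : ℝ => Real.log t * Real.exp (-(l * t))) (Set.Ioi 0) := by
  have hi1 := integrableOn_rpow_mul_exp_neg_mul (by norm_num : (-1:ℝ) < 1/2) hl
  have hi2 := integrableOn_rpow_mul_exp_neg_mul (by norm_num : (-1:ℝ) < -(1/2)) hl
  refine Integrable.mono ((hi1.const_mul 2).add (hi2.const_mul 2)) ?_ ?_
  · exact (Real.measurable_log.mul
      (Real.measurable_exp.comp (measurable_const.mul measurable_id).neg)).aestronglyMeasurable
  · rw [MeasureTheory.ae_restrict_iff' measurableSet_Ioi]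
    refine MeasureTheory.ae_of_all _ (fun t ht => ?_)
    have ht0 : (0:ℝ) < t := ht
    have hb : |Real.log t| ≤ 2 * t ^ ((1:ℝ)/2) + 2 * t ^ (-((1:ℝ)/2)) := by
      have hp1 : (0:ℝ) ≤ t ^ ((1:ℝ)/2) := Real.rpow_nonneg ht0.le _
      have hp2 : (0:ℝ) ≤ t ^ (-((1:ℝ)/2)) := Real.rpow_nonneg ht0.le _
      rw [abs_le]
      constructor
      · have h := Real.log_le_rpow_div (inv_nonneg.mpr ht0.le) (by norm_num : (0:ℝ) < 1/2)
        rw [Real.log_inv, Real.inv_rpow ht0.le, ← Real.rpow_neg ht0.le] at h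
        -- h : -log t ≤ t ^ (-(1/2)) / (1/2)
        linarith
      · have h := Real.log_le_rpow_div ht0.le (by norm_num : (0:ℝ) < 1/2)
        linarith
    have hexp : (0:ℝ) < Real.exp (-(l * t)) := Real.exp_pos _
    rw [Real.norm_eq_abs, Real.norm_eq_abs, abs_mul, abs_of_pos hexp]
    have hrhs : 2 * (t ^ ((1:ℝ)/2) * Real.exp (-(l * t))) + 2 * (t ^ (-(1/2):ℝ) * Real.exp (-(l * t)))
        = (2 * t ^ ((1:ℝ)/2) + 2 * t ^ (-((1:ℝ)/2))) * Real.exp (-(l * t)) := by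
      norm_num
      ring
    simp only [Pi.add_apply]
    rw [abs_of_nonneg (by positivity : (0:ℝ) ≤ 2 * (t ^ ((1:ℝ)/2) * Real.exp (-(l * t))) + 2 * (t ^ (-(1/2):ℝ) * Real.exp (-(l * t)))), hrhs]
    exact mul_le_mul_of_nonneg_right hb hexp.le

lemma integral_exp_neg_mul_Ioi {l : ℝ} (hl : 0 < l) :
    ∫ t in Set.Ioi (0:ℝ), Real.exp (-(l * t)) = 1 / l := by
  have h := Real.integral_rpow_mul_exp_neg_mul_Ioi one_pos hl
  simp only [sub_self, Real.rpow_zero, one_mul, Real.rpow_one, Real.Gamma_one, mul_one] at h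
  exact h

lemma integral_log_mul_exp_neg_mul {l : ℝ} (hl : 0 < l) :
    ∫ t in Set.Ioi (0:ℝ), Real.log t * Real.exp (-(l * t))
      = (-Real.eulerMascheroniConstant - Real.log l) / l := by
  have hcomp := integral_comp_mul_left_Ioi (fun s => Real.log s * Real.exp (-s)) 0 hl
  rw [mul_zero, integral_log_mul_exp_neg] at hcomp
  have hsplit : ∫ t in Set.Ioi (0:ℝ), Real.log (l * t) * Real.exp (-(l * t))
      = (∫ t in Set.Ioi (0:ℝ), Real.log l * Real.exp (-(l * t)))
        + ∫ t in Set.Ioi (0:ℝ), Real.log t * Real.exp (-(l * t)) := by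
    rw [← MeasureTheory.integral_add ((integrableOn_exp_neg_mul hl).const_mul _)
      (integrableOn_log_mul_exp_neg_mul hl)]
    refine MeasureTheory.setIntegral_congr_fun measurableSet_Ioi (fun t ht => ?_)
    have ht0 : (0:ℝ) < t := ht
    rw [Real.log_mul hl.ne' ht0.ne']
    ring
  rw [hsplit] at hcomp
  rw [MeasureTheory.integral_const_mul, integral_exp_neg_mul_Ioi hl] at hcomp
  have hinv : |l|⁻¹ = 1 / l := by rw [abs_of_pos hl]; exact (one_div l).symm
  rw [smul_eq_mul] at hcomp
  have : Real.log l * (1/l) + ∫ t in Set.Ioi (0:ℝ), Real.log t * Real.exp (-(l * t))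
      = l⁻¹ * -Real.eulerMascheroniConstant := hcomp
  field_simp at this ⊢
  linarith

/-- Probability weighted moments of the GEV distribution: for `γ < 1` and `k ∈ {0,1,2}`,
`E[M G_{(μ,σ,γ)}(M)^k] = (1/(k+1))·[μ - (σ/γ)(1 - (k+1)^γ Γ(1-γ))]`, interpreted for
`γ = 0` by continuity as `(1/(k+1))·[μ + σ(log (k+1) + γ_EM)]`. -/
theorem gev_pwm {Ω : Type*} [MeasureSpace Ω] [IsProbabilityMeasure (ℙ : Measure Ω)]
    (μ σ γ : ℝ) (hσ : 0 < σ) (hγ : γ < 1) (k : ℕ) (hk : k ∈ ({0, 1, 2} : Set ℕ))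
    (M : Ω → ℝ) (hM : Measurable M)
    (hcdf : ∀ x : ℝ, ℙ {ω | M ω ≤ x} = ENNReal.ofReal (gevCdf3 μ σ γ x)) :
    ∫ ω, M ω * (gevCdf3 μ σ γ (M ω)) ^ k ∂ℙ =
      if γ = 0 then
        (1 / ((k : ℝ) + 1)) * (μ + σ * (Real.log ((k : ℝ) + 1) + Real.eulerMascheroniConstant))
      else
        (1 / ((k : ℝ) + 1)) * (μ - (σ / γ) * (1 - ((k : ℝ) + 1) ^ γ * Real.Gamma (1 - γ))) := by
  have hGm := measurable_gevCdf3 μ σ γ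
  have hQm := measurable_gevQ μ σ γ
  set l : ℝ := (k : ℝ) + 1 with hl_def
  have hl : (0:ℝ) < l := by positivity
  have hsm1 : AEStronglyMeasurable (fun x : ℝ => x * (gevCdf3 μ σ γ x) ^ k)
      ((ℙ : Measure Ω).map M) :=
    (measurable_id.mul (hGm.pow_const k)).aestronglyMeasurable
  have h1 : ∫ ω, M ω * (gevCdf3 μ σ γ (M ω)) ^ k ∂ℙ
      = ∫ x, x * (gevCdf3 μ σ γ x) ^ k ∂((ℙ : Measure Ω).map M) :=
    (integral_map hM.aemeasurable hsm1).symm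
  rw [h1, gev_map_eq μ σ γ hσ M hM hcdf]
  have hsm2 : AEStronglyMeasurable (fun x : ℝ => x * (gevCdf3 μ σ γ x) ^ k)
      ((volume.restrict (Set.Ioo (0:ℝ) 1)).map (gevQ μ σ γ)) :=
    (measurable_id.mul (hGm.pow_const k)).aestronglyMeasurable
  rw [integral_map hQm.aemeasurable hsm2]
  have h2 : ∫ u, gevQ μ σ γ u * (gevCdf3 μ σ γ (gevQ μ σ γ u)) ^ k
        ∂(volume.restrict (Set.Ioo (0:ℝ) 1))
      = ∫ u in Set.Ioo (0:ℝ) 1, gevQ μ σ γ u * u ^ k := by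
    refine setIntegral_congr_fun measurableSet_Ioo (fun u hu => ?_)
    rw [gevCdf3_gevQ μ σ γ hσ hu]
  rw [h2]
  have himg : (fun t : ℝ => Real.exp (-t)) '' (Set.Ioi 0) = Set.Ioo 0 1 := by
    ext u
    simp only [Set.mem_image, Set.mem_Ioi, Set.mem_Ioo]
    constructor
    · rintro ⟨t, ht, rfl⟩
      exact ⟨Real.exp_pos _, by rw [Real.exp_lt_one_iff]; linarith⟩
    · rintro ⟨h0, h1'⟩
      exact ⟨-Real.log u, by simpa using Real.log_neg h0 h1', by simp [Real.exp_log h0]⟩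
  have hderiv : ∀ t ∈ Set.Ioi (0:ℝ), HasDerivWithinAt (fun t : ℝ => Real.exp (-t))
      (-Real.exp (-t)) (Set.Ioi 0) t := by
    intro t _
    simpa [Function.comp_def] using ((Real.hasDerivAt_exp (-t)).comp t ((hasDerivAt_id t).neg)).hasDerivWithinAt
  have hinj : Set.InjOn (fun t : ℝ => Real.exp (-t)) (Set.Ioi 0) :=
    (Real.exp_injective.comp neg_injective).injOn
  have h3 := integral_image_eq_integral_abs_deriv_smul measurableSet_Ioi hderiv hinj
    (fun u => gevQ μ σ γ u * u ^ k)
  rw [himg] at h3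
  rw [h3]
  by_cases hγ0 : γ = 0
  · subst hγ0
    rw [if_pos rfl]
    have hint : Set.EqOn
        (fun t : ℝ => |(-Real.exp (-t))| • ((fun u => gevQ μ σ 0 u * u ^ k) (Real.exp (-t))))
        (fun t : ℝ => μ * Real.exp (-(l*t)) - σ * (Real.log t * Real.exp (-(l*t))))
        (Set.Ioi 0) := by
      intro t ht
      simp only [smul_eq_mul]
      have habs : |(-Real.exp (-t))| = Real.exp (-t) := by
        rw [abs_neg, abs_of_pos (Real.exp_pos _)]
      have hq : gevQ μ σ 0 (Real.exp (-t)) = μ - σ * Real.log t := by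
        rw [gevQ, if_pos rfl, Real.log_exp, neg_neg]
      have hpow : Real.exp (-t) ^ k = Real.exp (-((k:ℝ) * t)) := by
        rw [← Real.exp_nat_mul]; ring_nf
      rw [habs, hq, hpow,
        show Real.exp (-(l*t)) = Real.exp (-t) * Real.exp (-((k:ℝ)*t)) by
          rw [← Real.exp_add]; congr 1; rw [hl_def]; ring]
      ring
    rw [setIntegral_congr_fun measurableSet_Ioi hint]
    rw [integral_sub ((integrableOn_exp_neg_mul hl).const_mul μ)
      ((integrableOn_log_mul_exp_neg_mul hl).const_mul σ),
      integral_const_mul, integral_const_mul, integral_exp_neg_mul_Ioi hl,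
      integral_log_mul_exp_neg_mul hl]
    field_simp
    ring
  · rw [if_neg hγ0]
    have hint : Set.EqOn
        (fun t : ℝ => |(-Real.exp (-t))| • ((fun u => gevQ μ σ γ u * u ^ k) (Real.exp (-t))))
        (fun t : ℝ => (μ - σ/γ) * Real.exp (-(l*t)) + (σ/γ) * (t ^ (-γ) * Real.exp (-(l*t))))
        (Set.Ioi 0) := by
      intro t ht
      simp only [smul_eq_mul]
      have habs : |(-Real.exp (-t))| = Real.exp (-t) := by
        rw [abs_neg, abs_of_pos (Real.exp_pos _)]
      have hq : gevQ μ σ γ (Real.exp (-t)) = μ + (σ/γ) * (t ^ (-γ) - 1) := by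
        rw [gevQ, if_neg hγ0, Real.log_exp, neg_neg]
      have hpow : Real.exp (-t) ^ k = Real.exp (-((k:ℝ) * t)) := by
        rw [← Real.exp_nat_mul]; ring_nf
      rw [habs, hq, hpow,
        show Real.exp (-(l*t)) = Real.exp (-t) * Real.exp (-((k:ℝ)*t)) by
          rw [← Real.exp_add]; congr 1; rw [hl_def]; ring]
      ring
    rw [setIntegral_congr_fun measurableSet_Ioi hint]
    have hG : ∫ t in Set.Ioi (0:ℝ), t ^ (-γ) * Real.exp (-(l * t))
        = (1/l) ^ ((1:ℝ) - γ) * Real.Gamma (1 - γ) := by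
      have h := Real.integral_rpow_mul_exp_neg_mul_Ioi (by linarith : (0:ℝ) < 1 - γ) hl
      simpa only [show (1:ℝ) - γ - 1 = -γ by ring] using h
    rw [integral_add ((integrableOn_exp_neg_mul hl).const_mul _)
      ((integrableOn_rpow_mul_exp_neg_mul (by linarith : (-1:ℝ) < -γ) hl).const_mul _),
      integral_const_mul, integral_const_mul, integral_exp_neg_mul_Ioi hl, hG]
    have hpowid : ((1:ℝ)/l) ^ ((1:ℝ) - γ) = l ^ γ * (1/l) := by
      rw [one_div, Real.inv_rpow hl.le, ← Real.rpow_neg hl.le,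
        show -((1:ℝ) - γ) = γ + (-1) by ring, Real.rpow_add hl, Real.rpow_neg_one]
    rw [hpowid]
    ring
end

section
/- For all u ∈ (0,1), the inequality 2((u² − u)/log u − u²) ≤ u(1−u) holds; i.e., the variance of the sliding blocks limit process at u is at most the variance u(1−u) of the standard Brownian bridge at u. -/
open Real

private lemma log_le_aux (u : ℝ) (h0 : 0 < u) (h1 : u ≤ 1) :
    Real.log u ≤ 2 * (u - 1) / (u + 1) := by
  set f : ℝ → ℝ := fun x => Real.log x - 2 * (x - 1) / (x + 1) with hf
  have hd : ∀ x ∈ interior (Set.Icc u 1), HasDerivAt f (x⁻¹ - 4 / (x + 1) ^ 2) x := by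
    intro x hx
    rw [interior_Icc] at hx
    have hx0 : 0 < x := lt_of_lt_of_le h0 hx.1.le
    have hx1 : x + 1 ≠ 0 := by linarith
    have h2 : HasDerivAt (fun y : ℝ => 2 * (y - 1) / (y + 1))
        ((2 * 1 * (x + 1) - 2 * (x - 1) * 1) / (x + 1) ^ 2) x := by
      exact (((hasDerivAt_id x).sub_const 1).const_mul 2).div
        ((hasDerivAt_id x).add_const 1) hx1
    have h3 : (2 * 1 * (x + 1) - 2 * (x - 1) * 1) / (x + 1) ^ 2 = 4 / (x + 1) ^ 2 := by
      rw [div_eq_div_iff (by positivity) (by positivity)]; ring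
    rw [h3] at h2
    exact (Real.hasDerivAt_log (ne_of_gt hx0)).sub h2
  have hmono : MonotoneOn f (Set.Icc u 1) := by
    apply monotoneOn_of_deriv_nonneg (convex_Icc u 1)
    · apply ContinuousOn.sub
      · exact Real.continuousOn_log.mono (by
          intro x hx
          exact Set.mem_compl_singleton_iff.mpr (ne_of_gt (lt_of_lt_of_le h0 hx.1)))
      · apply ContinuousOn.div (by fun_prop) (by fun_prop)
        intro x hx
        have := lt_of_lt_of_le h0 hx.1
        intro h; linarith
    · intro x hx
      exact (hd x hx).differentiableAt.differentiableWithinAt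
    · intro x hx
      rw [(hd x hx).deriv]
      rw [interior_Icc] at hx
      have hx0 : 0 < x := lt_of_lt_of_le h0 hx.1.le
      have hx1 : (0:ℝ) < (x + 1) ^ 2 := by positivity
      have h4 : 4 / (x + 1) ^ 2 ≤ x⁻¹ := by
        rw [div_le_iff₀ hx1, inv_mul_eq_div, le_div_iff₀ hx0]
        nlinarith [sq_nonneg (x - 1)]
      linarith
  have := hmono (Set.mem_Icc.mpr ⟨le_refl u, h1⟩) (Set.mem_Icc.mpr ⟨h1, le_refl 1⟩) h1
  have hfu : f 1 = 0 := by simp [hf]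
  have : f u ≤ 0 := hfu ▸ this
  simp only [hf] at this
  linarith

/-- The variance of the sliding-blocks limit process at `u ∈ (0,1)` is at most the variance
`u(1-u)` of the standard Brownian bridge: `2((u² - u)/log u - u²) ≤ u(1-u)`. -/
theorem slidingVar_le_brownianBridgeVar (u : ℝ) (hu : u ∈ Set.Ioo (0 : ℝ) 1) :
    2 * ((u ^ 2 - u) / Real.log u - u ^ 2) ≤ u * (1 - u) := by
  obtain ⟨h0, h1⟩ := hu
  have hL : Real.log u < 0 := Real.log_neg h0 h1
  have key : Real.log u ≤ 2 * (u - 1) / (u + 1) := log_le_aux u h0 h1.le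
  have hmain : (u ^ 2 - u) / Real.log u ≤ (u + u ^ 2) / 2 := by
    rw [div_le_iff_of_neg hL]
    have hpos : (0:ℝ) < (u + u ^ 2) / 2 := by positivity
    have hmul := mul_le_mul_of_nonneg_left key hpos.le
    have heq : (u + u ^ 2) / 2 * (2 * (u - 1) / (u + 1)) = u ^ 2 - u := by
      field_simp
      ring
    linarith [heq ▸ hmul]
  linarith
end

section
/- Let A be the set of bounded Borel-measurable functions on ℝ with the sup metric, C_b(ℝ) the bounded continuous functions, and W₁ the Wasserstein space of order 1 on ℝ. The map φ(a, g, μ) = ∫ y·g(y)·a(y) dμ(y) from A × C_b(ℝ) × W₁ to ℝ is continuous at every point (a,g,μ) with a ∈ C_b(ℝ). -/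
/-!
Testing the Wasserstein-1 supremum against `K⁻¹ h` gives `|∫ h dν - ∫ h dμ| ≤ K W₁(ν, μ)` for
every `K`-Lipschitz `h`, so `W₁`-convergence yields convergence of the integrals of all Lipschitz
functions: of the bounded ones (hence weak convergence), of `|y|`, and of the tails
`(|y| - t)⁺`, which are small for large `t` by dominated convergence. A continuous `f` with
`|f y| ≤ M |y|` differs from the bounded continuous `f ∘ clamp₋₂ₜ,₂ₜ` by at most
`4 M (|y| - t)⁺`, so an `ε/3` argument gives `∫ y g a dμₙ → ∫ y g a dμ`. Finally
`|y gₙ aₙ - y g a| ≤ ‖gₙ aₙ - g a‖_∞ |y|` and the first moments `∫ |y| dμₙ` converge, so replacing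
`gₙ aₙ` by `g a` costs `o(1)`.
-/

open MeasureTheory Filter Topology

/-- The Wasserstein-1 distance between two measures on ℝ, as the supremum over 1-Lipschitz
test functions of the absolute difference of integrals. -/
noncomputable def wasserstein1 (μ ν : MeasureTheory.Measure ℝ) : ℝ :=
  sSup {d : ℝ | ∃ h : ℝ → ℝ, LipschitzWith 1 h ∧ d = |(∫ x, h x ∂μ) - ∫ x, h x ∂ν|}

lemma abs_integral_sub_integral_le {α : Type*} [MeasurableSpace α] {ρ : Measure α}
    {f g φ : α → ℝ} (hf : Integrable f ρ) (hg : Integrable g ρ) (hφ : Integrable φ ρ)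
    (h : ∀ x, |f x - g x| ≤ φ x) :
    |∫ x, f x ∂ρ - ∫ x, g x ∂ρ| ≤ ∫ x, φ x ∂ρ := by
  rw [← integral_sub hf hg]
  exact norm_integral_le_of_norm_le (f := fun x => f x - g x) hφ (ae_of_all _ h)

lemma tendsto_of_forall_approx {ι α : Type*} [PseudoMetricSpace α] {l : Filter ι}
    {x : ι → α} {L : α}
    (h : ∀ ε > 0, ∃ (y : ι → α) (m : α), Tendsto y l (𝓝 m) ∧ dist L m < ε ∧
      ∀ᶠ i in l, dist (x i) (y i) < ε) :
    Tendsto x l (𝓝 L) := by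
  refine Metric.tendsto_nhds.mpr fun ε hε => ?_
  obtain ⟨y, m, hy, hLm, hxy⟩ := h (ε / 3) (by positivity)
  filter_upwards [hxy, Metric.tendsto_nhds.mp hy (ε / 3) (by positivity)] with i hxyi hyi
  calc dist (x i) L ≤ dist (x i) (y i) + dist (y i) m + dist m L := dist_triangle4 _ _ _ _
    _ < ε := by rw [dist_comm m L]; linarith

section FirstMoment

variable {ρ : Measure ℝ} {K : NNReal} {h : ℝ → ℝ}

lemma integrable_of_abs_le_mul_abs {f : ℝ → ℝ} {M : ℝ} (hf : AEStronglyMeasurable f ρ)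
    (hρ : Integrable (fun x => |x|) ρ) (hfM : ∀ y, |f y| ≤ M * |y|) : Integrable f ρ :=
  (hρ.const_mul M).mono' hf (ae_of_all _ hfM)

lemma LipschitzWith.abs_sub_apply_zero_le (hh : LipschitzWith K h) (x : ℝ) :
    |h x - h 0| ≤ K * |x| := by
  simpa [Real.dist_eq] using hh.dist_le_mul x 0

lemma LipschitzWith.integrable_of_integrable_abs [IsFiniteMeasure ρ] (hh : LipschitzWith K h)
    (hρ : Integrable (fun x => |x|) ρ) : Integrable h ρ := by
  refine ((integrable_const |h 0|).add (hρ.const_mul K)).mono' hh.continuous.aestronglyMeasurable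
    (ae_of_all _ fun x => ?_)
  have := hh.abs_sub_apply_zero_le x
  simp only [Real.norm_eq_abs, Pi.add_apply]
  linarith [abs_sub_abs_le_abs_sub (h x) (h 0)]

lemma LipschitzWith.abs_integral_sub_apply_zero_le [IsProbabilityMeasure ρ] (hh : LipschitzWith K h)
    (hρ : Integrable (fun x => |x|) ρ) : |∫ x, h x ∂ρ - h 0| ≤ K * ∫ x, |x| ∂ρ := by
  have := abs_integral_sub_integral_le (hh.integrable_of_integrable_abs hρ)
    (integrable_const (h 0)) (hρ.const_mul K) hh.abs_sub_apply_zero_le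
  simpa [integral_const_mul] using this

end FirstMoment

section Wasserstein

variable {μ ν : Measure ℝ} [IsProbabilityMeasure μ] [IsProbabilityMeasure ν]
  {K : NNReal} {h : ℝ → ℝ}

lemma bddAbove_wasserstein1_set (hν : Integrable (fun x => |x|) ν)
    (hμ : Integrable (fun x => |x|) μ) :
    BddAbove {d : ℝ | ∃ h : ℝ → ℝ, LipschitzWith 1 h ∧ d = |(∫ x, h x ∂ν) - ∫ x, h x ∂μ|} := by
  refine ⟨(∫ x, |x| ∂ν) + ∫ x, |x| ∂μ, ?_⟩
  rintro _ ⟨h, hh, rfl⟩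
  have hν' := hh.abs_integral_sub_apply_zero_le hν
  have hμ' := hh.abs_integral_sub_apply_zero_le hμ
  rw [NNReal.coe_one, one_mul] at hν' hμ'
  calc |(∫ x, h x ∂ν) - ∫ x, h x ∂μ|
      ≤ |(∫ x, h x ∂ν) - h 0| + |h 0 - ∫ x, h x ∂μ| := abs_sub_le _ _ _
    _ ≤ _ := by rw [abs_sub_comm (h 0)]; exact add_le_add hν' hμ'

lemma LipschitzWith.abs_integral_sub_integral_le_wasserstein1 (hh : LipschitzWith K h)
    (hν : Integrable (fun x => |x|) ν) (hμ : Integrable (fun x => |x|) μ) :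
    |(∫ x, h x ∂ν) - ∫ x, h x ∂μ| ≤ K * wasserstein1 ν μ := by
  rcases eq_or_ne K 0 with rfl | hK
  · have hconst : h = fun _ => h 0 := funext fun x => (LipschitzWith.zero_iff h).mp hh x 0
    rw [hconst]
    simp
  have hK' : (0 : ℝ) < K := by positivity
  have hscaled : LipschitzWith 1 fun x => (K : ℝ)⁻¹ * h x := by
    refine LipschitzWith.of_dist_le_mul fun x y => ?_
    rw [Real.dist_eq, ← mul_sub, abs_mul, abs_inv, abs_of_pos hK', NNReal.coe_one, one_mul,
      inv_mul_le_iff₀ hK', ← Real.dist_eq]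
    exact hh.dist_le_mul x y
  have hle := le_csSup (bddAbove_wasserstein1_set hν hμ) ⟨_, hscaled, rfl⟩
  rw [integral_const_mul, integral_const_mul, ← mul_sub, abs_mul, abs_inv,
    abs_of_pos hK', inv_mul_le_iff₀ hK'] at hle
  exact hle

end Wasserstein

lemma lipschitzWith_one_max_abs_sub (t : ℝ) : LipschitzWith 1 fun y : ℝ => max (|y| - t) 0 := by
  simpa using ((lipschitzWith_one_norm (E := ℝ)).sub (LipschitzWith.const t)).max_const 0

lemma tendsto_integral_max_abs_sub_atTop {μ : Measure ℝ} (hμ : Integrable (fun x => |x|) μ) :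
    Tendsto (fun t : ℝ => ∫ y, max (|y| - t) 0 ∂μ) atTop (𝓝 0) := by
  have hdom : ∀ᶠ t : ℝ in atTop, ∀ᵐ y ∂μ, ‖max (|y| - t) 0‖ ≤ |y| := by
    filter_upwards [eventually_ge_atTop 0] with t ht
    refine ae_of_all _ fun y => ?_
    rw [Real.norm_of_nonneg (le_max_right _ _)]
    exact max_le (by linarith) (abs_nonneg y)
  have hlim : ∀ᵐ y ∂μ, Tendsto (fun t : ℝ => max (|y| - t) 0) atTop (𝓝 0) := by
    refine ae_of_all _ fun y => tendsto_const_nhds.congr' ?_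
    filter_upwards [eventually_ge_atTop |y|] with t ht
    exact (max_eq_right (by linarith)).symm
  simpa using tendsto_integral_filter_of_dominated_convergence _
    (.of_forall fun t => (lipschitzWith_one_max_abs_sub t).continuous.aestronglyMeasurable)
    hdom hμ hlim

lemma abs_max_neg_min_le {s : ℝ} (hs : 0 ≤ s) (y : ℝ) : |max (-s) (min y s)| ≤ s :=
  abs_le.mpr ⟨le_max_left _ _, max_le (by linarith) (min_le_right _ _)⟩

lemma abs_sub_apply_clamp_le {f : ℝ → ℝ} {M t : ℝ} (hM : 0 ≤ M) (ht : 0 ≤ t)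
    (hfM : ∀ y, |f y| ≤ M * |y|) (y : ℝ) :
    |f y - f (max (-(2 * t)) (min y (2 * t)))| ≤ 4 * M * max (|y| - t) 0 := by
  by_cases hy : |y| ≤ 2 * t
  · rw [min_eq_left (abs_le.mp hy).2, max_eq_right (abs_le.mp hy).1, sub_self, abs_zero]
    positivity
  have hclamp := mul_le_mul_of_nonneg_left (abs_max_neg_min_le (by positivity : 0 ≤ 2 * t) y) hM
  calc |f y - f (max (-(2 * t)) (min y (2 * t)))|
      ≤ |f y| + |f (max (-(2 * t)) (min y (2 * t)))| := abs_sub _ _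
    _ ≤ M * |y| + M * (2 * t) := add_le_add (hfM y) ((hfM _).trans hclamp)
    _ ≤ 4 * M * (|y| - t) := by nlinarith
    _ ≤ 4 * M * max (|y| - t) 0 := mul_le_mul_of_nonneg_left (le_max_left _ _) (by positivity)

section Convergence

variable {ι : Type*} {l : Filter ι} {μ : Measure ℝ} {μs : ι → Measure ℝ}
  [IsProbabilityMeasure μ] [∀ i, IsProbabilityMeasure (μs i)]

lemma tendsto_integral_of_lipschitzWith {K : NNReal} {h : ℝ → ℝ} (hh : LipschitzWith K h)
    (hμ : Integrable (fun x => |x|) μ) (hμs : ∀ i, Integrable (fun x => |x|) (μs i))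
    (hW : Tendsto (fun i => wasserstein1 (μs i) μ) l (𝓝 0)) :
    Tendsto (fun i => ∫ x, h x ∂(μs i)) l (𝓝 (∫ x, h x ∂μ)) := by
  rw [tendsto_iff_norm_sub_tendsto_zero]
  refine squeeze_zero (fun _ => norm_nonneg _)
    (fun i => hh.abs_integral_sub_integral_le_wasserstein1 (hμs i) hμ) ?_
  simpa using hW.const_mul (K : ℝ)

lemma ProbabilityMeasure.tendsto_of_tendsto_wasserstein1 [l.IsCountablyGenerated]
    {P : ProbabilityMeasure ℝ} {Ps : ι → ProbabilityMeasure ℝ}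
    (hP : Integrable (fun x => |x|) (P : Measure ℝ))
    (hPs : ∀ i, Integrable (fun x => |x|) (Ps i : Measure ℝ))
    (hW : Tendsto (fun i => wasserstein1 (Ps i) P) l (𝓝 0)) :
    Tendsto Ps l (𝓝 P) :=
  tendsto_iff_forall_lipschitz_integral_tendsto.mpr fun _ _ ⟨_, hh⟩ =>
    tendsto_integral_of_lipschitzWith hh hP hPs hW

lemma tendsto_integral_of_abs_le_mul_abs [l.IsCountablyGenerated] {f : ℝ → ℝ} (hf : Continuous f)
    {M : ℝ} (hfM : ∀ y, |f y| ≤ M * |y|)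
    (hμ : Integrable (fun x => |x|) μ) (hμs : ∀ i, Integrable (fun x => |x|) (μs i))
    (hW : Tendsto (fun i => wasserstein1 (μs i) μ) l (𝓝 0)) :
    Tendsto (fun i => ∫ y, f y ∂(μs i)) l (𝓝 (∫ y, f y ∂μ)) := by
  have hM : 0 ≤ M := by simpa using (abs_nonneg _).trans (hfM 1)
  have hweak := ProbabilityMeasure.tendsto_iff_forall_integral_tendsto.mp
    (ProbabilityMeasure.tendsto_of_tendsto_wasserstein1 (P := ⟨μ, ‹_›⟩)
      (Ps := fun i => ⟨μs i, inferInstance⟩) hμ hμs hW)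
  refine tendsto_of_forall_approx fun ε hε => ?_
  obtain ⟨t, ht, htail⟩ : ∃ t : ℝ, 0 ≤ t ∧ 4 * M * ∫ y, max (|y| - t) 0 ∂μ < ε := by
    have := (tendsto_integral_max_abs_sub_atTop hμ).const_mul (4 * M)
    rw [mul_zero] at this
    exact ((eventually_ge_atTop 0).and (this.eventually (gt_mem_nhds hε))).exists
  have hclamp : Continuous fun y : ℝ => max (-(2 * t)) (min y (2 * t)) := by fun_prop
  let fc : BoundedContinuousFunction ℝ ℝ := .ofNormedAddCommGroup _ (hf.comp hclamp)
    (M * (2 * t)) fun y =>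
      (hfM _).trans (mul_le_mul_of_nonneg_left (abs_max_neg_min_le (by positivity) y) hM)
  have happrox : ∀ (ρ : Measure ℝ) [IsProbabilityMeasure ρ], Integrable (fun x => |x|) ρ →
      dist (∫ y, f y ∂ρ) (∫ y, fc y ∂ρ) ≤ 4 * M * ∫ y, max (|y| - t) 0 ∂ρ := fun ρ _ hρ => by
    rw [Real.dist_eq, ← integral_const_mul]
    exact abs_integral_sub_integral_le (integrable_of_abs_le_mul_abs hf.aestronglyMeasurable hρ hfM)
      (fc.integrable ρ)
      (((lipschitzWith_one_max_abs_sub t).integrable_of_integrable_abs hρ).const_mul _)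
      (abs_sub_apply_clamp_le hM ht hfM)
  have htail_conv := (tendsto_integral_of_lipschitzWith (lipschitzWith_one_max_abs_sub t)
    hμ hμs hW).const_mul (4 * M)
  refine ⟨fun i => ∫ y, fc y ∂(μs i), ∫ y, fc y ∂μ, hweak fc, (happrox μ hμ).trans_lt htail, ?_⟩
  filter_upwards [htail_conv.eventually (gt_mem_nhds htail)] with i hi
  exact (happrox (μs i) (hμs i)).trans_lt hi

end Convergence

lemma abs_sub_le_iSup_abs_sub {α : Type*} {u v : α → ℝ} (hu : ∃ C, ∀ x, |u x| ≤ C)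
    (hv : ∃ C, ∀ x, |v x| ≤ C) (x : α) : |u x - v x| ≤ ⨆ y, |u y - v y| := by
  obtain ⟨Cu, hCu⟩ := hu
  obtain ⟨Cv, hCv⟩ := hv
  refine le_ciSup (f := fun y => |u y - v y|) ⟨Cu + Cv, ?_⟩ x
  rintro _ ⟨y, rfl⟩
  exact (abs_sub _ _).trans (add_le_add (hCu y) (hCv y))

lemma abs_mul_sub_mul_le {g a g' a' G A δg δa : ℝ} (hg : |g| ≤ G) (ha : |a| ≤ A)
    (hδg : |g' - g| ≤ δg) (hδa : |a' - a| ≤ δa) :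
    |g' * a' - g * a| ≤ (G + δg) * δa + A * δg := by
  have hg' : |g'| ≤ G + δg := by linarith [abs_sub_abs_le_abs_sub g' g]
  calc |g' * a' - g * a| = |g' * (a' - a) + a * (g' - g)| := by ring_nf
    _ ≤ |g'| * |a' - a| + |a| * |g' - g| := by
        rw [← abs_mul, ← abs_mul]; exact abs_add_le _ _
    _ ≤ (G + δg) * δa + A * δg := by
        gcongr
        · exact (abs_nonneg _).trans hg'
        · exact (abs_nonneg _).trans ha

lemma abs_mul_mul_le {u v : ℝ → ℝ} {Cu Cv : ℝ} (hu : ∀ x, |u x| ≤ Cu) (hv : ∀ x, |v x| ≤ Cv)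
    (y : ℝ) : |y * u y * v y| ≤ Cu * Cv * |y| := by
  rw [abs_mul, abs_mul, mul_assoc, mul_comm]
  exact mul_le_mul_of_nonneg_right
    (mul_le_mul (hu y) (hv y) (abs_nonneg _) ((abs_nonneg _).trans (hu y))) (abs_nonneg y)

/-- Sequential continuity of `φ(a,g,μ) = ∫ y g(y) a(y) dμ(y)` at points where `a` is
continuous: if `aₙ → a` and `gₙ → g` uniformly (with `aₙ` bounded measurable, `gₙ, a, g`
bounded continuous) and `μₙ → μ` in Wasserstein-1 distance among probability measures with
finite first moment, then `∫ y gₙ(y) aₙ(y) dμₙ(y) → ∫ y g(y) a(y) dμ(y)`. -/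
theorem integral_functional_continuous
    (a g : ℝ → ℝ) (aseq gseq : ℕ → ℝ → ℝ)
    (μ : MeasureTheory.Measure ℝ) (μs : ℕ → MeasureTheory.Measure ℝ)
    [IsProbabilityMeasure μ] [∀ n, IsProbabilityMeasure (μs n)]
    (ha : Continuous a) (habd : ∃ C, ∀ x, |a x| ≤ C)
    (hg : Continuous g) (hgbd : ∃ C, ∀ x, |g x| ≤ C)
    (haseq : ∀ n, Measurable (aseq n)) (haseqbd : ∀ n, ∃ C, ∀ x, |aseq n x| ≤ C)
    (hgseq : ∀ n, Continuous (gseq n)) (hgseqbd : ∀ n, ∃ C, ∀ x, |gseq n x| ≤ C)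
    (hμmom : Integrable (fun x => |x|) μ) (hμsmom : ∀ n, Integrable (fun x => |x|) (μs n))
    (haunif : Tendsto (fun n => ⨆ x : ℝ, |aseq n x - a x|) atTop (nhds 0))
    (hgunif : Tendsto (fun n => ⨆ x : ℝ, |gseq n x - g x|) atTop (nhds 0))
    (hW : Tendsto (fun n => wasserstein1 (μs n) μ) atTop (nhds 0)) :
    Tendsto (fun n => ∫ y, y * gseq n y * aseq n y ∂(μs n)) atTop
      (nhds (∫ y, y * g y * a y ∂μ)) := by
  obtain ⟨A, hA⟩ := habd
  obtain ⟨G, hG⟩ := hgbd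
  set B : ℕ → ℝ := fun n =>
    (G + ⨆ x, |gseq n x - g x|) * (⨆ x, |aseq n x - a x|) + A * ⨆ x, |gseq n x - g x|
  have hB : Tendsto B atTop (𝓝 0) := by
    simpa using ((tendsto_const_nhds.add hgunif).mul haunif).add (hgunif.const_mul A)
  have hlim_integrable : ∀ n, Integrable (fun y => y * g y * a y) (μs n) := fun n =>
    integrable_of_abs_le_mul_abs (by fun_prop) (hμsmom n) (abs_mul_mul_le hG hA)
  have hperturb : ∀ n, |∫ y, y * gseq n y * aseq n y ∂(μs n) - ∫ y, y * g y * a y ∂(μs n)|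
      ≤ B n * ∫ y, |y| ∂(μs n) := fun n => by
    obtain ⟨Ca, hCa⟩ := haseqbd n
    obtain ⟨Cg, hCg⟩ := hgseqbd n
    rw [← integral_const_mul]
    refine abs_integral_sub_integral_le (integrable_of_abs_le_mul_abs
      ((measurable_id.mul (hgseq n).measurable).mul (haseq n)).aestronglyMeasurable (hμsmom n)
      (abs_mul_mul_le hCg hCa)) (hlim_integrable n) ((hμsmom n).const_mul _) fun y => ?_
    rw [mul_assoc, mul_assoc, ← mul_sub, abs_mul, mul_comm]
    exact mul_le_mul_of_nonneg_right (abs_mul_sub_mul_le (hG y) (hA y)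
      (abs_sub_le_iSup_abs_sub ⟨Cg, hCg⟩ ⟨G, hG⟩ y) (abs_sub_le_iSup_abs_sub ⟨Ca, hCa⟩ ⟨A, hA⟩ y))
      (abs_nonneg y)
  have hmoment := tendsto_integral_of_lipschitzWith lipschitzWith_one_norm hμmom hμsmom hW
  have hlimit := tendsto_integral_of_abs_le_mul_abs (by fun_prop) (abs_mul_mul_le hG hA)
    hμmom hμsmom hW
  have hdiff : Tendsto (fun n => ∫ y, y * gseq n y * aseq n y ∂(μs n)
      - ∫ y, y * g y * a y ∂(μs n)) atTop (𝓝 0) :=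
    squeeze_zero_norm hperturb (by simpa using hB.mul hmoment)
  simpa using hdiff.add hlimit
end

section
/- Let (X_t) be a strictly stationary sequence and suppose there are sequences a_r > 0, b_r ∈ ℝ, γ ∈ ℝ such that (max(X_1,…,X_r) − b_r)/a_r converges in distribution to G_γ, and a_{⌊rs⌋}/a_r → s^γ, (b_{⌊rs⌋} − b_r)/a_r → (s^γ−1)/γ for all s > 0. If the observations consist of i.i.d. copies of length-r stretches of (X_t) concatenated (sampling scheme (S2)), then for every ξ ∈ [0,1] the sliding block maximum over indices {1+⌊rξ⌋, …, r+⌊rξ⌋}, affinely rescaled by (a_r, b_r), converges in distribution to G_γ as r → ∞. -/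
/-!
Write `F_m(u) = P(max(X_0, …, X_{m-1}) ≤ u)`. Under (S2) the window starting at `k = ⌊rξ⌋`
consists of the last `r - k` observations of one stretch and the first `k` observations of the
next, independent, stretch, so by stationarity its distribution function factorises as
`F_{r-k}(u) F_k(u)`. Regular variation of `(a_r, b_r)` together with max-stability of `G_γ`,
`G_γ(s^γ y + c_s)^s = G_γ(y)`, gives `F_{⌊rs⌋}(a_r x + b_r) → G_γ(x)^s` for every `s > 0`, and
since `F_m` is antitone in `m` this extends to any block lengths `k_r` with `k_r / r → s ≥ 0`.
The two factors therefore converge to `G_γ(x)^{1-ξ}` and `G_γ(x)^ξ`.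
-/

open MeasureTheory ProbabilityTheory Real Filter Topology

/-- `(1+γx)^(-1/γ)`, interpreted as `exp (-x)` for `γ = 0`. -/
noncomputable def gevTail (γ x : ℝ) : ℝ :=
  if γ = 0 then Real.exp (-x) else (1 + γ * x) ^ (-1 / γ)

section Squeeze

variable {ι β α : Type*} [LinearOrder α] [TopologicalSpace α] [OrderTopology α]
  {l : Filter ι} {la : Filter β} {f : β → α} {g : ι → β → α} {φ : ι → α} {c : α}

theorem eventually_lt_of_tendsto_family_le [l.NeBot] (hφ : Tendsto φ l (𝓝 c))
    (hg : ∀ᶠ t in l, Tendsto (g t) la (𝓝 (φ t)) ∧ ∀ᶠ x in la, g t x ≤ f x)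
    {c' : α} (hc' : c' < c) : ∀ᶠ x in la, c' < f x := by
  obtain ⟨t, hφt, hgt, hle⟩ := ((hφ.eventually (lt_mem_nhds hc')).and hg).exists
  filter_upwards [hgt.eventually (lt_mem_nhds hφt), hle] with x hlt hle
  exact hlt.trans_le hle

theorem tendsto_of_tendsto_family_squeeze {u : Filter ι} [l.NeBot] [u.NeBot]
    (hφl : Tendsto φ l (𝓝 c)) (hφu : Tendsto φ u (𝓝 c))
    (hl : ∀ᶠ t in l, Tendsto (g t) la (𝓝 (φ t)) ∧ ∀ᶠ x in la, g t x ≤ f x)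
    (hu : ∀ᶠ t in u, Tendsto (g t) la (𝓝 (φ t)) ∧ ∀ᶠ x in la, f x ≤ g t x) :
    Tendsto f la (𝓝 c) :=
  tendsto_order.2 ⟨fun _ => eventually_lt_of_tendsto_family_le hφl hl,
    fun _ => eventually_lt_of_tendsto_family_le (α := αᵒᵈ) hφu hu⟩

end Squeeze

theorem tendsto_nat_floor_mul_const_atTop {s : ℝ} (hs : 0 < s) :
    Tendsto (fun r : ℕ => ⌊(r : ℝ) * s⌋₊) atTop atTop :=
  tendsto_nat_floor_atTop.comp (tendsto_natCast_atTop_atTop.atTop_mul_const hs)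

theorem tendsto_nat_floor_mul_const_div {s : ℝ} (hs : 0 ≤ s) :
    Tendsto (fun r : ℕ => (⌊(r : ℝ) * s⌋₊ : ℝ) / r) atTop (𝓝 s) := by
  simpa only [mul_comm _ s, Function.comp_def] using
    (tendsto_nat_floor_mul_div_atTop hs).comp tendsto_natCast_atTop_atTop

noncomputable def gevShift (γ s : ℝ) : ℝ :=
  if γ = 0 then Real.log s else (s ^ γ - 1) / γ

section GEV

variable {γ s y : ℝ}

theorem one_add_mul_gevShift :
    1 + γ * (s ^ γ * y + gevShift γ s) = s ^ γ * (1 + γ * y) := by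
  unfold gevShift
  split_ifs with hγ
  · simp [hγ]
  · field_simp
    ring

theorem gevTail_rpow_mul_add_gevShift (hs : 0 < s) (hy : 0 ≤ 1 + γ * y) :
    gevTail γ (s ^ γ * y + gevShift γ s) = gevTail γ y / s := by
  unfold gevTail
  split_ifs with hγ
  · simp [gevShift, hγ, Real.exp_add, Real.exp_neg, Real.exp_log hs, div_eq_mul_inv, mul_comm]
  · rw [one_add_mul_gevShift, Real.mul_rpow (by positivity) hy, ← Real.rpow_mul hs.le,
      show γ * (-1 / γ) = -1 by field_simp, Real.rpow_neg_one]
    ring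

theorem continuousAt_gevTail (hy : 0 < 1 + γ * y) : ContinuousAt (gevTail γ) y := by
  unfold gevTail
  split_ifs with hγ
  · fun_prop
  · exact (continuousAt_const.add (continuousAt_const.mul continuousAt_id)).rpow_const
      (Or.inl hy.ne')

end GEV

theorem tendsto_nat_floor_mul_of_maxDomain (F : ℕ → ℝ → ℝ) (hF : ∀ m, Monotone (F m))
    {a b : ℕ → ℝ} {γ s x : ℝ} (ha : ∀ r, 0 < a r) (hs : 0 < s)
    (hascale : Tendsto (fun r : ℕ => a ⌊(r : ℝ) * s⌋₊ / a r) atTop (𝓝 (s ^ γ)))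
    (hbscale : Tendsto (fun r : ℕ => (b ⌊(r : ℝ) * s⌋₊ - b r) / a r) atTop
      (𝓝 (gevShift γ s)))
    (hlim : ∀ z : ℝ, 0 < 1 + γ * z →
      Tendsto (fun r : ℕ => F r (a r * z + b r)) atTop (𝓝 (Real.exp (-gevTail γ z))))
    (hx : 0 < 1 + γ * x) :
    Tendsto (fun r : ℕ => F ⌊(r : ℝ) * s⌋₊ (a r * x + b r)) atTop
      (𝓝 (Real.exp (-(s * gevTail γ x)))) := by
  have hsγ : 0 < s ^ γ := Real.rpow_pos_of_pos hs γ
  -- `y` is the level at block length `⌊rs⌋` that corresponds to the level `x` at length `r`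
  set y := (x - gevShift γ s) / s ^ γ
  have hxy : s ^ γ * y + gevShift γ s = x := by
    simp only [y]
    field_simp
    ring
  have hy : 0 < 1 + γ * y := by
    rw [← hxy, one_add_mul_gevShift] at hx
    exact pos_of_mul_pos_right hx hsγ.le
  have hτ : s * gevTail γ x = gevTail γ y := by
    rw [← hxy, gevTail_rpow_mul_add_gevShift hs hy.le]
    field_simp
  have hnorm : ∀ z, Tendsto (fun r : ℕ => (a ⌊(r : ℝ) * s⌋₊ * z + b ⌊(r : ℝ) * s⌋₊ - b r) / a r)
      atTop (𝓝 (s ^ γ * z + gevShift γ s)) := fun z =>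
    ((hascale.mul_const z).add hbscale).congr fun r => by
      field_simp [(ha r).ne']
      ring
  have hgz : ∀ᶠ z in 𝓝 y, Tendsto (fun r : ℕ => F ⌊(r : ℝ) * s⌋₊
      (a ⌊(r : ℝ) * s⌋₊ * z + b ⌊(r : ℝ) * s⌋₊)) atTop (𝓝 (Real.exp (-gevTail γ z))) := by
    filter_upwards [((continuous_const.add (continuous_const_mul γ)).tendsto y).eventually_const_lt
      hy] with z hz
    exact (hlim z hz).comp (tendsto_nat_floor_mul_const_atTop hs)
  have hφ : Tendsto (fun z => Real.exp (-gevTail γ z)) (𝓝 y) (𝓝 (Real.exp (-gevTail γ y))) :=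
    (continuousAt_gevTail hy).neg.rexp
  rw [hτ]
  refine tendsto_of_tendsto_family_squeeze (l := 𝓝[<] y) (u := 𝓝[>] y)
    (f := fun r : ℕ => F ⌊(r : ℝ) * s⌋₊ (a r * x + b r))
    (g := fun z r => F ⌊(r : ℝ) * s⌋₊ (a ⌊(r : ℝ) * s⌋₊ * z + b ⌊(r : ℝ) * s⌋₊))
    (hφ.mono_left nhdsWithin_le_nhds) (hφ.mono_left nhdsWithin_le_nhds) ?_ ?_
  · filter_upwards [nhdsWithin_le_nhds hgz, self_mem_nhdsWithin] with z hz hzy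
    refine ⟨hz, ?_⟩
    have hlt : s ^ γ * z + gevShift γ s < x := by rw [← hxy]; gcongr; exact hzy
    filter_upwards [(hnorm z).eventually_lt_const hlt] with r hr
    rw [div_lt_iff₀ (ha r)] at hr
    exact hF _ (by linarith)
  · filter_upwards [nhdsWithin_le_nhds hgz, self_mem_nhdsWithin] with z hz hzy
    refine ⟨hz, ?_⟩
    have hlt : x < s ^ γ * z + gevShift γ s := by rw [← hxy]; gcongr; exact hzy
    filter_upwards [(hnorm z).eventually_const_lt hlt] with r hr
    rw [lt_div_iff₀ (ha r)] at hr
    exact hF _ (by linarith)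

theorem eventually_le_nat_floor_mul {k : ℕ → ℕ} {s t : ℝ}
    (hk : Tendsto (fun r : ℕ => (k r : ℝ) / r) atTop (𝓝 s)) (hst : s < t) :
    ∀ᶠ r : ℕ in atTop, k r ≤ ⌊(r : ℝ) * t⌋₊ := by
  filter_upwards [hk.eventually_lt_const hst, eventually_gt_atTop 0] with r hr hr0
  rw [div_lt_iff₀ (by exact_mod_cast hr0)] at hr
  exact Nat.le_floor (by linarith)

theorem eventually_nat_floor_mul_le {k : ℕ → ℕ} {s t : ℝ}
    (hk : Tendsto (fun r : ℕ => (k r : ℝ) / r) atTop (𝓝 s)) (hts : t < s) :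
    ∀ᶠ r : ℕ in atTop, ⌊(r : ℝ) * t⌋₊ ≤ k r := by
  filter_upwards [hk.eventually_const_lt hts, eventually_gt_atTop 0] with r hr hr0
  rw [lt_div_iff₀ (by exact_mod_cast hr0)] at hr
  exact Nat.floor_le_of_le (by linarith)

theorem tendsto_of_tendsto_div (F : ℕ → ℝ → ℝ) (hF : ∀ u, Antitone (F · u))
    (hF1 : ∀ m u, F m u ≤ 1) {u : ℕ → ℝ} {T : ℝ}
    (hfloor : ∀ t : ℝ, 0 < t →
      Tendsto (fun r : ℕ => F ⌊(r : ℝ) * t⌋₊ (u r)) atTop (𝓝 (Real.exp (-(t * T)))))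
    {k : ℕ → ℕ} {s : ℝ} (hs : 0 ≤ s) (hk : Tendsto (fun r : ℕ => (k r : ℝ) / r) atTop (𝓝 s)) :
    Tendsto (fun r : ℕ => F (k r) (u r)) atTop (𝓝 (Real.exp (-(s * T)))) := by
  have hφ : Tendsto (fun t => Real.exp (-(t * T))) (𝓝 s) (𝓝 (Real.exp (-(s * T)))) :=
    (by fun_prop : Continuous fun t => Real.exp (-(t * T))).tendsto s
  refine tendsto_order.2 ⟨fun c hc => ?_, fun c hc => ?_⟩
  · refine eventually_lt_of_tendsto_family_le (l := 𝓝[>] s)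
      (g := fun t (r : ℕ) => F ⌊(r : ℝ) * t⌋₊ (u r)) (hφ.mono_left nhdsWithin_le_nhds)
      ?_ hc
    filter_upwards [self_mem_nhdsWithin] with t hst
    exact ⟨hfloor t (hs.trans_lt hst),
      (eventually_le_nat_floor_mul hk hst).mono fun r hr => hF _ hr⟩
  · rcases hs.eq_or_lt with rfl | hs
    · exact Eventually.of_forall fun r => (hF1 _ _).trans_lt (by simpa using hc)
    refine eventually_lt_of_tendsto_family_le (α := ℝᵒᵈ) (l := 𝓝[<] s)
      (g := fun t (r : ℕ) => F ⌊(r : ℝ) * t⌋₊ (u r)) (hφ.mono_left nhdsWithin_le_nhds) ?_ hc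
    filter_upwards [Ioo_mem_nhdsLT hs] with t hts
    exact ⟨hfloor t hts.1, (eventually_nat_floor_mul_le hk hts.2).mono fun r hr => hF _ hr⟩

theorem setOf_iSup_le_eq {ι Ω : Type*} [Finite ι] [Nonempty ι] (g : ι → Ω → ℝ) (u : ℝ) :
    {ω | (⨆ i, g i ω) ≤ u} = {ω | ∀ i, g i ω ≤ u} :=
  Set.ext fun ω => ciSup_le_iff (Set.finite_range fun i => g i ω).bddAbove

theorem measurableSet_setOf_forall_le {ι : Type*} [Countable ι] {κ : Type*} (c : ι → κ) (u : ℝ) :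
    MeasurableSet {f : κ → ℝ | ∀ i, f (c i) ≤ u} := by
  simp only [Set.ofPred_forall]
  exact .iInter fun i => measurableSet_le (measurable_pi_apply _) measurable_const

section PartialMax

variable {Ω : Type*} [MeasurableSpace Ω] {μ : Measure Ω} {X X' : ℕ → Ω → ℝ}

def partialMaxCdf (μ : Measure Ω) (X : ℕ → Ω → ℝ) (m : ℕ) (u : ℝ) : ℝ :=
  (μ {ω | ∀ i : Fin m, X i ω ≤ u}).toReal

theorem monotone_partialMaxCdf [IsFiniteMeasure μ] (m : ℕ) : Monotone (partialMaxCdf μ X m) :=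
  fun _ _ huv => ENNReal.toReal_mono (measure_ne_top _ _)
    (measure_mono fun _ hω i => (hω i).trans huv)

theorem antitone_partialMaxCdf [IsFiniteMeasure μ] (u : ℝ) :
    Antitone (partialMaxCdf μ X · u) :=
  fun _ _ hmn => ENNReal.toReal_mono (measure_ne_top _ _)
    (measure_mono fun _ hω i => hω (Fin.castLE hmn i))

theorem partialMaxCdf_le_one [IsProbabilityMeasure μ] (m : ℕ) (u : ℝ) :
    partialMaxCdf μ X m u ≤ 1 :=
  ENNReal.toReal_le_of_le_ofReal zero_le_one (by simpa using prob_le_one)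

theorem measure_forall_shift_le_eq (hX : ∀ i, Measurable (X i)) {k m : ℕ}
    (hstat : Measure.map (fun ω => fun i : Fin m => X (i + k) ω) μ =
      Measure.map (fun ω => fun i : Fin m => X i ω) μ) (u : ℝ) :
    μ {ω | ∀ i : Fin m, X (i + k) ω ≤ u} = μ {ω | ∀ i : Fin m, X i ω ≤ u} := by
  have hS := measurableSet_setOf_forall_le (fun i : Fin m => i) u
  change μ ((fun ω => fun i : Fin m => X (i + k) ω) ⁻¹' {v | ∀ i, v i ≤ u}) =
    μ ((fun ω => fun i : Fin m => X i ω) ⁻¹' {v | ∀ i, v i ≤ u})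
  rw [← Measure.map_apply (by fun_prop) hS, hstat, Measure.map_apply (by fun_prop) hS]

theorem measure_forall_le_eq_of_map_eq (hX : ∀ i, Measurable (X i))
    (hX' : ∀ i, Measurable (X' i))
    (hcopy : Measure.map (fun ω => fun n : ℕ => X n ω) μ =
      Measure.map (fun ω => fun n : ℕ => X' n ω) μ) (m : ℕ) (u : ℝ) :
    μ {ω | ∀ i : Fin m, X' i ω ≤ u} = μ {ω | ∀ i : Fin m, X i ω ≤ u} := by
  have hS := measurableSet_setOf_forall_le (fun i : Fin m => (i : ℕ)) u
  change μ ((fun ω n => X' n ω) ⁻¹' {f | ∀ i : Fin m, f i ≤ u}) =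
    μ ((fun ω n => X n ω) ⁻¹' {f | ∀ i : Fin m, f i ≤ u})
  rw [← Measure.map_apply (by fun_prop) hS, ← Measure.map_apply (by fun_prop) hS, hcopy]

theorem measure_window_le_eq_mul (hX : ∀ i, Measurable (X i)) (hX' : ∀ i, Measurable (X' i))
    (hstat : ∀ k m : ℕ, Measure.map (fun ω => fun i : Fin m => X (i + k) ω) μ =
      Measure.map (fun ω => fun i : Fin m => X i ω) μ)
    (hcopy : Measure.map (fun ω => fun n : ℕ => X n ω) μ =
      Measure.map (fun ω => fun n : ℕ => X' n ω) μ)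
    (hindep : IndepFun (fun ω => fun n : ℕ => X n ω) (fun ω => fun n : ℕ => X' n ω) μ)
    {k r : ℕ} (hkr : k ≤ r) (u : ℝ) :
    μ {ω | ∀ i : Fin r, (if k + i < r then X (k + i) ω else X' (k + i - r) ω) ≤ u} =
      μ {ω | ∀ i : Fin (r - k), X i ω ≤ u} * μ {ω | ∀ i : Fin k, X i ω ≤ u} := by
  have hsplit : {ω | ∀ i : Fin r, (if k + i < r then X (k + i) ω else X' (k + i - r) ω) ≤ u} =
      {ω | ∀ i : Fin (r - k), X (i + k) ω ≤ u} ∩ {ω | ∀ i : Fin k, X' i ω ≤ u} := by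
    ext ω
    simp only [Set.mem_ofPred_eq, Set.mem_inter_iff]
    refine ⟨fun h => ⟨fun i => ?_, fun i => ?_⟩, fun ⟨h₁, h₂⟩ i => ?_⟩
    · simpa [if_pos (by omega : k + i < r), add_comm] using h ⟨i, by omega⟩
    · simpa [if_neg (by omega : ¬k + (r - k + i) < r), show k + (r - k + i) - r = i by omega]
        using h ⟨r - k + i, by omega⟩
    · split_ifs with hlt
      · simpa [add_comm] using h₁ ⟨i, by omega⟩
      · exact h₂ ⟨k + i - r, by omega⟩
  rw [hsplit, ← measure_forall_shift_le_eq hX (hstat k _),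
    ← measure_forall_le_eq_of_map_eq hX hX' hcopy]
  exact hindep.measure_inter_preimage_eq_mul {f | ∀ i : Fin (r - k), f (i + k) ≤ u}
    {f | ∀ i : Fin k, f i ≤ u} (measurableSet_setOf_forall_le _ u)
    (measurableSet_setOf_forall_le _ u)

end PartialMax

/-- Lemma 2.3 (asymptotic stationarity of sliding block maxima under sampling scheme (S2)):
let `(X_t)` be a strictly stationary sequence in the max-domain of attraction of `G_γ` with
scaling sequences `a_r > 0, b_r` satisfying the regular-variation conditions, and let `X'`
be an independent copy of the process `X`. Under scheme (S2), the sliding block maximum over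
indices `{1+⌊rξ⌋, …, r+⌊rξ⌋}` equals the maximum of the concatenated sequence
(season one: `X`, season two: `X'`) over that window; affinely rescaled by `(a_r, b_r)`, it
converges in distribution to `G_γ` as `r → ∞`, for every `ξ ∈ [0,1]`. -/
theorem sliding_block_max_S2_weak_conv {Ω : Type*} [MeasureSpace Ω]
    [IsProbabilityMeasure (ℙ : Measure Ω)]
    (X X' : ℕ → Ω → ℝ) (hX : ∀ i, Measurable (X i)) (hX' : ∀ i, Measurable (X' i))
    (a : ℕ → ℝ) (b : ℕ → ℝ) (γ : ℝ) (ha : ∀ r, 0 < a r)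
    -- strict stationarity of (X_t)
    (hstat : ∀ k m : ℕ,
      Measure.map (fun ω => fun i : Fin m => X (i + k) ω) ℙ =
        Measure.map (fun ω => fun i : Fin m => X i ω) ℙ)
    -- X' is an independent copy of the process X
    (hcopy : Measure.map (fun ω => fun n : ℕ => X n ω) ℙ =
      Measure.map (fun ω => fun n : ℕ => X' n ω) ℙ)
    (hindep : IndepFun (fun ω => fun n : ℕ => X n ω) (fun ω => fun n : ℕ => X' n ω) ℙ)
    -- regular variation of the scaling sequences
    (hascale : ∀ s : ℝ, 0 < s →
      Tendsto (fun r : ℕ => a (Nat.floor ((r : ℝ) * s)) / a r) atTop (nhds (s ^ γ)))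
    (hbscale : ∀ s : ℝ, 0 < s →
      Tendsto (fun r : ℕ => (b (Nat.floor ((r : ℝ) * s)) - b r) / a r) atTop
        (nhds (if γ = 0 then Real.log s else (s ^ γ - 1) / γ)))
    -- max-domain of attraction: (max(X_1,…,X_r) - b_r)/a_r → G_γ in distribution
    (hmda : ∀ x : ℝ, 1 + γ * x > 0 →
      Tendsto (fun r : ℕ => (ℙ {ω | (⨆ i : Fin r, X i ω) ≤ a r * x + b r}).toReal) atTop
        (nhds (Real.exp (-gevTail γ x)))) :
    ∀ ξ ∈ Set.Icc (0 : ℝ) 1, ∀ x : ℝ, 1 + γ * x > 0 →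
      Tendsto (fun r : ℕ =>
        (ℙ {ω | (⨆ i : Fin r,
            if Nat.floor ((r : ℝ) * ξ) + (i : ℕ) < r then
              X (Nat.floor ((r : ℝ) * ξ) + (i : ℕ)) ω
            else X' (Nat.floor ((r : ℝ) * ξ) + (i : ℕ) - r) ω) ≤ a r * x + b r}).toReal)
        atTop (nhds (Real.exp (-gevTail γ x))) := by
  intro ξ hξ x hx
  set F := partialMaxCdf (ℙ : Measure Ω) X
  have hkr : ∀ r : ℕ, ⌊(r : ℝ) * ξ⌋₊ ≤ r := fun r =>
    Nat.floor_le_of_le (mul_le_of_le_one_right r.cast_nonneg hξ.2)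
  have hk := tendsto_nat_floor_mul_const_div hξ.1
  have hrk : Tendsto (fun r : ℕ => ((r - ⌊(r : ℝ) * ξ⌋₊ : ℕ) : ℝ) / r) atTop (𝓝 (1 - ξ)) := by
    refine (tendsto_const_nhds.sub hk).congr' ?_
    filter_upwards [eventually_gt_atTop 0] with r hr
    rw [Nat.cast_sub (hkr r), sub_div, div_self (by positivity)]
  have hmda' : ∀ z, 0 < 1 + γ * z →
      Tendsto (fun r => F r (a r * z + b r)) atTop (𝓝 (Real.exp (-gevTail γ z))) := fun z hz =>
    (hmda z hz).congr' <| (eventually_gt_atTop 0).mono fun r hr => by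
      have := Fin.pos_iff_nonempty.mp hr
      rw [setOf_iSup_le_eq]
      rfl
  have hfloor : ∀ t : ℝ, 0 < t → Tendsto (fun r : ℕ => F ⌊(r : ℝ) * t⌋₊ (a r * x + b r)) atTop
      (𝓝 (Real.exp (-(t * gevTail γ x)))) := fun t ht =>
    tendsto_nat_floor_mul_of_maxDomain F monotone_partialMaxCdf ha ht (hascale t ht)
      (hbscale t ht) hmda' hx
  have hlim := (tendsto_of_tendsto_div F antitone_partialMaxCdf partialMaxCdf_le_one hfloor
    (sub_nonneg.2 hξ.2) hrk).mul
    (tendsto_of_tendsto_div F antitone_partialMaxCdf partialMaxCdf_le_one hfloor hξ.1 hk)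
  rw [← Real.exp_add, show -((1 - ξ) * gevTail γ x) + -(ξ * gevTail γ x) = -gevTail γ x by ring]
    at hlim
  refine hlim.congr' ((eventually_gt_atTop 0).mono fun r hr => ?_)
  have := Fin.pos_iff_nonempty.mp hr
  beta_reduce
  rw [setOf_iSup_le_eq, measure_window_le_eq_mul hX hX' hstat hcopy hindep (hkr r),
    ENNReal.toReal_mul]
  rfl
end

section
/- Let Z ~ G_γ with γ < 1. Define f₁(x) = x·G_γ(x) + E[Z·1(Z > x)]. Then f₁ admits the representation f₁(x) = ∫_{(1+γx)^{-1/γ}}^∞ e^{-t} t^{-γ-1} dt + β_{γ,0} for all x with 1+γx > 0, where β_{γ,0} = E[Z] (for γ = 0 the lower limit is e^{-x}). -/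
open MeasureTheory ProbabilityTheory Real

/-- The standard GEV cdf, extended to all of ℝ. -/
noncomputable def gevCdfFull (γ x : ℝ) : ℝ :=
  if γ = 0 then Real.exp (-Real.exp (-x))
  else if 1 + γ * x > 0 then Real.exp (-(1 + γ * x) ^ (-1 / γ))
  else if γ > 0 then 0 else 1

/-!
Write `τ(y) = (1 + γy)^(-1/γ)` (`e^{-y}` for `γ = 0`), so that `G_γ = e^{-τ}` on
`S_γ = {1 + γy > 0}`, `τ' = -τ^(1+γ)` there, and `G_γ` is `0` or `1` off `S_γ`.
By the layer-cake formula, `E[(x - Z)⁺] = ∫_{-∞}^x G_γ(y) dy`, and the substitution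
`s = τ(y)` turns this into `∫_{τ(x)}^∞ e^{-s} s^{-γ-1} ds`. Since
`E[(x - Z)⁺] = x G_γ(x) - E[Z; Z ≤ x]`, adding `E[Z]` gives the representation.
The same substitution turns `E[Z⁺] = ∫_0^∞ (1 - G_γ)` into `∫_0^1 (1 - e^{-s}) s^{-γ-1} ds`,
finite because `γ < 1`; this is what makes `Z` integrable.
-/

open Set

lemma integrableOn_exp_neg_mul_rpow_Ioi (a : ℝ) {u : ℝ} (hu : 0 < u) :
    IntegrableOn (fun s => exp (-s) * s ^ a) (Ioi u) :=
  integrable_of_isBigO_exp_neg one_half_pos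
    (continuousOn_id.neg.rexp.mul
      (continuousOn_id.rpow_const fun _ hs => Or.inl (hu.trans_le hs).ne'))
    (Gamma_integrand_isLittleO a).isBigO

lemma integral_Ioi_comp_sub_left {E : Type*} [NormedAddCommGroup E] [NormedSpace ℝ E]
    (f : ℝ → E) (x : ℝ) : ∫ t in Ioi 0, f (x - t) = ∫ y in Iio x, f y := by
  have h := (Measure.measurePreserving_sub_left volume x).setIntegral_preimage_emb
    (Homeomorph.subLeft x).measurableEmbedding f (Iio x)
  rwa [show (fun t => x - t) ⁻¹' Iio x = Ioi 0 by ext; simp] at h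

lemma integrableOn_Ioi_comp_sub_left_iff {E : Type*} [NormedAddCommGroup E] {f : ℝ → E}
    {x : ℝ} : IntegrableOn (fun t => f (x - t)) (Ioi 0) ↔ IntegrableOn f (Iio x) := by
  have h := (Measure.measurePreserving_sub_left volume x).integrableOn_comp_preimage
    (Homeomorph.subLeft x).measurableEmbedding (f := f) (s := Iio x)
  rwa [show (fun t => x - t) ⁻¹' Iio x = Ioi 0 by ext; simp] at h

section LayerCake

variable {α : Type*} [MeasurableSpace α] {μ : Measure α} {f : α → ℝ} {g : ℝ → ℝ}

lemma integrable_of_meas_lt_le_ofReal (hf_nn : 0 ≤ f) (hf : AEMeasurable f μ)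
    (hg : IntegrableOn g (Ioi 0)) (hfg : ∀ t > 0, μ {a | t < f a} ≤ ENNReal.ofReal (g t)) :
    Integrable f μ := by
  refine ⟨hf.aestronglyMeasurable, (hasFiniteIntegral_iff_ofReal (ae_of_all _ hf_nn)).2 ?_⟩
  rw [lintegral_eq_lintegral_meas_lt μ (ae_of_all _ hf_nn) hf]
  exact (setLIntegral_mono' measurableSet_Ioi hfg).trans_lt hg.lintegral_lt_top

lemma integrable_and_integral_eq_of_meas_le_eq_ofReal (hf_nn : 0 ≤ f) (hf : AEMeasurable f μ)
    (hg : IntegrableOn g (Ioi 0)) (hg_nn : ∀ t > 0, 0 ≤ g t)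
    (hfg : ∀ t > 0, μ {a | t ≤ f a} = ENNReal.ofReal (g t)) :
    Integrable f μ ∧ ∫ a, f a ∂μ = ∫ t in Ioi 0, g t := by
  have hint : Integrable f μ := integrable_of_meas_lt_le_ofReal hf_nn hf hg fun t ht =>
    (measure_mono fun a (h : t < f a) => h.le).trans (hfg t ht).le
  refine ⟨hint, ?_⟩
  rw [hint.integral_eq_integral_meas_le (ae_of_all _ hf_nn)]
  refine setIntegral_congr_fun measurableSet_Ioi fun t ht => ?_
  rw [measureReal_def, hfg t ht, ENNReal.toReal_ofReal (hg_nn t ht)]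

lemma integral_max_sub_zero_eq [IsFiniteMeasure μ] (hfm : Measurable f)
    (hf : Integrable f μ) (x : ℝ) :
    ∫ a, max (x - f a) 0 ∂μ = x * μ.real {a | f a ≤ x} - ∫ a in {a | f a ≤ x}, f a ∂μ := by
  have hs : MeasurableSet {a | f a ≤ x} := measurableSet_le hfm measurable_const
  have h : (fun a => max (x - f a) 0) = {a | f a ≤ x}.indicator (fun a => x - f a) := by
    ext a
    by_cases ha : f a ≤ x
    · simp [ha]
    · simp [ha, (not_le.1 ha).le]
  rw [h, integral_indicator hs, integral_sub (integrable_const x).integrableOn hf.integrableOn,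
    setIntegral_const, smul_eq_mul, mul_comm]

end LayerCake

def gevSupport (γ : ℝ) : Set ℝ := {y | 0 < 1 + γ * y}

noncomputable def gevTailInv (γ s : ℝ) : ℝ :=
  if γ = 0 then -Real.log s else (s ^ (-γ) - 1) / γ

section GevTail

variable {γ x : ℝ}

lemma measurableSet_gevSupport (γ : ℝ) : MeasurableSet (gevSupport γ) :=
  measurableSet_lt measurable_const (by fun_prop)

lemma isOpen_gevSupport (γ : ℝ) : IsOpen (gevSupport γ) :=
  isOpen_lt continuous_const (by fun_prop)

lemma convex_gevSupport (γ : ℝ) : Convex ℝ (gevSupport γ) := by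
  intro a ha b hb s t hs ht hst
  simp only [gevSupport, mem_ofPred_eq, smul_eq_mul] at *
  have h : 1 + γ * (s * a + t * b) = s * (1 + γ * a) + t * (1 + γ * b) := by
    linear_combination -hst
  rcases hs.eq_or_lt with rfl | hs
  · simp_all
  · rw [h]
    exact add_pos_of_pos_of_nonneg (mul_pos hs ha) (mul_nonneg ht hb.le)

lemma gevTail_pos (hx : x ∈ gevSupport γ) : 0 < gevTail γ x := by
  unfold gevTail
  split_ifs
  · exact exp_pos _
  · exact rpow_pos_of_pos hx _

lemma gevCdfFull_eq_exp_neg_gevTail (hx : x ∈ gevSupport γ) :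
    gevCdfFull γ x = exp (-gevTail γ x) := by
  have hx' : 1 + γ * x > 0 := hx
  simp only [gevCdfFull, gevTail, hx', if_true]
  split_ifs <;> rfl

lemma gevCdfFull_eq_zero (hγ : 0 < γ) (hx : x ∉ gevSupport γ) : gevCdfFull γ x = 0 := by
  have hx' : ¬ 1 + γ * x > 0 := hx
  simp [gevCdfFull, hγ.ne', hx', hγ]

lemma gevCdfFull_eq_one (hγ : γ < 0) (hx : x ∉ gevSupport γ) : gevCdfFull γ x = 1 := by
  have hx' : ¬ 1 + γ * x > 0 := hx
  simp [gevCdfFull, hγ.ne, hx', hγ.not_gt]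

lemma gevCdfFull_nonneg (γ x : ℝ) : 0 ≤ gevCdfFull γ x := by
  unfold gevCdfFull
  split_ifs <;> positivity

lemma hasDerivAt_gevTail (hx : x ∈ gevSupport γ) :
    HasDerivAt (gevTail γ) (-gevTail γ x ^ (1 + γ)) x := by
  by_cases hγ : γ = 0
  · subst hγ
    have h : gevTail 0 = fun y => exp (-y) := funext fun y => if_pos rfl
    simpa [h] using (hasDerivAt_neg x).exp
  · have h : gevTail γ = fun y => (1 + γ * y) ^ (-1 / γ) := funext fun y => if_neg hγ
    rw [h, ← rpow_mul hx.le]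
    refine ((((hasDerivAt_id' x).const_mul γ).const_add 1).rpow_const
      (Or.inl hx.ne')).congr_deriv ?_
    rw [show -1 / γ * (1 + γ) = -1 / γ - 1 by field_simp; ring]
    field_simp

lemma strictAntiOn_gevTail (γ : ℝ) : StrictAntiOn (gevTail γ) (gevSupport γ) := by
  refine strictAntiOn_of_deriv_neg (convex_gevSupport γ)
    (fun y hy => (hasDerivAt_gevTail hy).continuousAt.continuousWithinAt) fun y hy => ?_
  rw [(isOpen_gevSupport γ).interior_eq] at hy
  rw [(hasDerivAt_gevTail hy).deriv, neg_lt_zero]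
  exact rpow_pos_of_pos (gevTail_pos hy) _

lemma gevTailInv_mem_gevSupport {s : ℝ} (hs : 0 < s) : gevTailInv γ s ∈ gevSupport γ := by
  by_cases hγ : γ = 0
  · simp [gevSupport, hγ]
  · have : 1 + γ * gevTailInv γ s = s ^ (-γ) := by
      simp only [gevTailInv, if_neg hγ]
      field_simp
      ring
    rw [gevSupport, mem_ofPred_eq, this]
    exact rpow_pos_of_pos hs _

lemma gevTail_gevTailInv {s : ℝ} (hs : 0 < s) : gevTail γ (gevTailInv γ s) = s := by
  by_cases hγ : γ = 0
  · simp [gevTail, gevTailInv, hγ, exp_log hs]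
  · simp only [gevTail, gevTailInv, if_neg hγ]
    rw [show 1 + γ * ((s ^ (-γ) - 1) / γ) = s ^ (-γ) by field_simp; ring,
      ← rpow_mul hs.le, show -γ * (-1 / γ) = 1 by field_simp, rpow_one]

lemma gevTail_image_Iio (hx : x ∈ gevSupport γ) :
    gevTail γ '' (gevSupport γ ∩ Iio x) = Ioi (gevTail γ x) := by
  ext s
  constructor
  · rintro ⟨y, ⟨hy, hyx⟩, rfl⟩
    exact strictAntiOn_gevTail γ hy hx hyx
  · intro hs
    have hs0 : 0 < s := (gevTail_pos hx).trans hs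
    have hinv := gevTailInv_mem_gevSupport (γ := γ) hs0
    refine ⟨gevTailInv γ s, ⟨hinv, ?_⟩, gevTail_gevTailInv hs0⟩
    rw [mem_Iio, ← (strictAntiOn_gevTail γ).lt_iff_gt hx hinv, gevTail_gevTailInv hs0]
    exact hs

lemma gevTail_image_Ioi (hx : x ∈ gevSupport γ) :
    gevTail γ '' (gevSupport γ ∩ Ioi x) = Ioo 0 (gevTail γ x) := by
  ext s
  constructor
  · rintro ⟨y, ⟨hy, hxy⟩, rfl⟩
    exact ⟨gevTail_pos hy, strictAntiOn_gevTail γ hx hy hxy⟩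
  · rintro ⟨hs0, hs⟩
    have hinv := gevTailInv_mem_gevSupport (γ := γ) hs0
    refine ⟨gevTailInv γ s, ⟨hinv, ?_⟩, gevTail_gevTailInv hs0⟩
    rw [mem_Ioi, ← (strictAntiOn_gevTail γ).lt_iff_gt hinv hx, gevTail_gevTailInv hs0]
    exact hs

lemma abs_deriv_gevTail_smul (hx : x ∈ gevSupport γ) (f : ℝ → ℝ) :
    |-gevTail γ x ^ (1 + γ)| • (f (gevTail γ x) * gevTail γ x ^ (-γ - 1)) = f (gevTail γ x) := by
  have hτ := gevTail_pos hx
  rw [abs_neg, abs_of_pos (rpow_pos_of_pos hτ _), smul_eq_mul, mul_left_comm, ← rpow_add hτ,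
    show 1 + γ + (-γ - 1) = 0 by ring, rpow_zero, mul_one]

variable {S : Set ℝ}

lemma integral_gevTail_image (hS : MeasurableSet S) (hSγ : S ⊆ gevSupport γ) (f : ℝ → ℝ) :
    ∫ s in gevTail γ '' S, f s * s ^ (-γ - 1) = ∫ y in S, f (gevTail γ y) := by
  rw [integral_image_eq_integral_abs_deriv_smul hS
    (fun y hy => (hasDerivAt_gevTail (hSγ hy)).hasDerivWithinAt)
    ((strictAntiOn_gevTail γ).injOn.mono hSγ)]
  exact setIntegral_congr_fun hS fun y hy => abs_deriv_gevTail_smul (hSγ hy) f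

lemma integrableOn_gevTail_image_iff (hS : MeasurableSet S) (hSγ : S ⊆ gevSupport γ)
    (f : ℝ → ℝ) :
    IntegrableOn (fun s => f s * s ^ (-γ - 1)) (gevTail γ '' S) ↔
      IntegrableOn (fun y => f (gevTail γ y)) S := by
  rw [integrableOn_image_iff_integrableOn_abs_deriv_smul hS
    (fun y hy => (hasDerivAt_gevTail (hSγ hy)).hasDerivWithinAt)
    ((strictAntiOn_gevTail γ).injOn.mono hSγ)]
  exact integrableOn_congr_fun (fun y hy => abs_deriv_gevTail_smul (hSγ hy) f) hS

end GevTail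

section GevCdf

variable {γ x : ℝ}

lemma integrableOn_and_integral_gevCdfFull_Iio (hx : x ∈ gevSupport γ) :
    IntegrableOn (gevCdfFull γ) (Iio x) ∧
      ∫ y in Iio x, gevCdfFull γ y = ∫ s in Ioi (gevTail γ x), exp (-s) * s ^ (-γ - 1) := by
  set S := gevSupport γ ∩ Iio x
  have hS : MeasurableSet S := (measurableSet_gevSupport γ).inter measurableSet_Iio
  have hG : EqOn (gevCdfFull γ) (fun y => exp (-gevTail γ y)) S :=
    fun y hy => gevCdfFull_eq_exp_neg_gevTail hy.1
  have hzero : ∀ y ∈ Iio x \ S, gevCdfFull γ y = 0 := by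
    rintro y ⟨hyx, hyS⟩
    have hy : y ∉ gevSupport γ := fun h => hyS ⟨h, hyx⟩
    refine gevCdfFull_eq_zero ?_ hy
    have hy' : ¬0 < 1 + γ * y := hy
    have hx' : 0 < 1 + γ * x := hx
    nlinarith [mem_Iio.1 hyx]
  have himg := gevTail_image_Iio hx
  have hint : IntegrableOn (gevCdfFull γ) S := by
    refine ((integrableOn_gevTail_image_iff hS inter_subset_left fun s => exp (-s)).1 ?_)
      |>.congr_fun (fun y hy => (hG hy).symm) hS
    rw [himg]
    exact integrableOn_exp_neg_mul_rpow_Ioi _ (gevTail_pos hx)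
  refine ⟨hint.of_forall_sdiff_eq_zero measurableSet_Iio hzero, ?_⟩
  rw [setIntegral_eq_of_subset_of_forall_sdiff_eq_zero measurableSet_Iio inter_subset_right hzero,
    ← himg, integral_gevTail_image hS inter_subset_left, setIntegral_congr_fun hS hG]

lemma integrableOn_one_sub_gevCdfFull_Ioi (hγ : γ < 1) (hx : x ∈ gevSupport γ) :
    IntegrableOn (fun y => 1 - gevCdfFull γ y) (Ioi x) := by
  set S := gevSupport γ ∩ Ioi x
  have hS : MeasurableSet S := (measurableSet_gevSupport γ).inter measurableSet_Ioi
  have hzero : ∀ y ∈ Ioi x \ S, 1 - gevCdfFull γ y = 0 := by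
    rintro y ⟨hxy, hyS⟩
    have hy : y ∉ gevSupport γ := fun h => hyS ⟨h, hxy⟩
    have hγ0 : γ < 0 := by
      have hy' : ¬0 < 1 + γ * y := hy
      have hx' : 0 < 1 + γ * x := hx
      nlinarith [mem_Ioi.1 hxy]
    rw [gevCdfFull_eq_one hγ0 hy, sub_self]
  have hτ := gevTail_pos hx
  have hint : IntegrableOn (fun s => (1 - exp (-s)) * s ^ (-γ - 1)) (Ioo 0 (gevTail γ x)) := by
    have hpow : IntegrableOn (fun s => s ^ (-γ)) (Ioo 0 (gevTail γ x)) :=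
      (intervalIntegral.integrableOn_Ioo_rpow_iff hτ).2 (by linarith)
    refine hpow.mono' (by fun_prop) ?_
    filter_upwards [ae_restrict_mem measurableSet_Ioo] with s hs
    obtain ⟨hs, -⟩ := hs
    have h1 : 0 ≤ 1 - exp (-s) := sub_nonneg.2 (exp_le_one_iff.2 (neg_nonpos.2 hs.le))
    have h2 : 1 - exp (-s) ≤ s := by linarith [add_one_le_exp (-s)]
    rw [norm_of_nonneg (by positivity)]
    calc (1 - exp (-s)) * s ^ (-γ - 1) ≤ s * s ^ (-γ - 1) := by gcongr
      _ = s ^ (-γ - 1 + 1) := by rw [rpow_add_one hs.ne', mul_comm]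
      _ = s ^ (-γ) := by ring_nf
  rw [← gevTail_image_Ioi hx, integrableOn_gevTail_image_iff hS inter_subset_left] at hint
  exact (hint.congr_fun (fun y hy => by rw [gevCdfFull_eq_exp_neg_gevTail hy.1]) hS)
    |>.of_forall_sdiff_eq_zero measurableSet_Ioi hzero

end GevCdf

section GevRandomVariable

variable {Ω : Type*} [MeasureSpace Ω] {γ : ℝ} {Z : Ω → ℝ}

lemma gev_integrable_and_integral_max_sub_zero (hZ : Measurable Z)
    (hcdf : ∀ x : ℝ, ℙ {ω | Z ω ≤ x} = ENNReal.ofReal (gevCdfFull γ x)) {x : ℝ}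
    (hx : x ∈ gevSupport γ) :
    Integrable (fun ω => max (x - Z ω) 0) ℙ ∧
      ∫ ω, max (x - Z ω) 0 = ∫ s in Ioi (gevTail γ x), exp (-s) * s ^ (-γ - 1) := by
  obtain ⟨hGint, hGeq⟩ := integrableOn_and_integral_gevCdfFull_Iio hx
  rw [← hGeq, ← integral_Ioi_comp_sub_left]
  refine integrable_and_integral_eq_of_meas_le_eq_ofReal (fun ω => le_max_right _ _)
    (by fun_prop) (integrableOn_Ioi_comp_sub_left_iff.2 hGint)
    (fun t _ => gevCdfFull_nonneg γ _) fun t ht => ?_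
  have hset : {ω | t ≤ max (x - Z ω) 0} = {ω | Z ω ≤ x - t} := by
    ext ω
    simp only [mem_ofPred_eq, le_max_iff, not_le.2 ht, or_false]
    constructor <;> intro h <;> linarith
  rw [hset, hcdf]

lemma gev_integrable_max_zero [IsProbabilityMeasure (ℙ : Measure Ω)] (hγ : γ < 1)
    (hZ : Measurable Z) (hcdf : ∀ x : ℝ, ℙ {ω | Z ω ≤ x} = ENNReal.ofReal (gevCdfFull γ x)) :
    Integrable (fun ω => max (Z ω) 0) ℙ := by
  refine integrable_of_meas_lt_le_ofReal (fun ω => le_max_right _ _) (by fun_prop)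
    (integrableOn_one_sub_gevCdfFull_Ioi hγ (by simp [gevSupport])) fun t ht => le_of_eq ?_
  have hset : {ω | t < max (Z ω) 0} = {ω | Z ω ≤ t}ᶜ := by
    ext ω
    simp [not_lt.2 ht.le]
  rw [hset, prob_compl_eq_one_sub (measurableSet_le hZ measurable_const), hcdf,
    ENNReal.ofReal_sub _ (gevCdfFull_nonneg γ t), ENNReal.ofReal_one]

lemma gev_integrable [IsProbabilityMeasure (ℙ : Measure Ω)] (hγ : γ < 1) (hZ : Measurable Z)
    (hcdf : ∀ x : ℝ, ℙ {ω | Z ω ≤ x} = ENNReal.ofReal (gevCdfFull γ x)) : Integrable Z ℙ := by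
  have hneg : Integrable (fun ω => max (0 - Z ω) 0) ℙ :=
    (gev_integrable_and_integral_max_sub_zero hZ hcdf (by simp [gevSupport])).1
  simp only [zero_sub] at hneg
  exact ((gev_integrable_max_zero hγ hZ hcdf).sub hneg).congr
    (ae_of_all _ fun ω => max_zero_sub_max_neg_zero_eq_self (Z ω))

end GevRandomVariable

/-- For `Z ~ G_γ` with `γ < 1`, the function `f₁(x) = x G_γ(x) + E[Z 1(Z > x)]` admits the
representation `f₁(x) = ∫_{(1+γx)^{-1/γ}}^∞ e^{-t} t^{-γ-1} dt + β_{γ,0}` with `β_{γ,0} = E[Z]`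
(lower limit `e^{-x}` for `γ = 0`). -/
theorem f1_integral_representation {Ω : Type*} [MeasureSpace Ω]
    [IsProbabilityMeasure (ℙ : Measure Ω)] (γ : ℝ) (hγ : γ < 1)
    (Z : Ω → ℝ) (hZ : Measurable Z)
    (hcdf : ∀ x : ℝ, ℙ {ω | Z ω ≤ x} = ENNReal.ofReal (gevCdfFull γ x)) :
    ∀ x : ℝ, 1 + γ * x > 0 →
      x * gevCdfFull γ x + ∫ ω in {ω | Z ω > x}, Z ω ∂ℙ =
        (∫ t in Set.Ioi (gevTail γ x), Real.exp (-t) * t ^ (-γ - 1)) + ∫ ω, Z ω ∂ℙ := by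
  intro x hx
  have hZint := gev_integrable hγ hZ hcdf
  have hsplit := integral_add_compl
    (measurableSet_le hZ measurable_const : MeasurableSet {ω | Z ω ≤ x}) hZint
  have hcompl : {ω | Z ω ≤ x}ᶜ = {ω | Z ω > x} := by ext; simp
  have hGx : (ℙ : Measure Ω).real {ω | Z ω ≤ x} = gevCdfFull γ x := by
    rw [measureReal_def, hcdf, ENNReal.toReal_ofReal (gevCdfFull_nonneg γ x)]
  rw [← (gev_integrable_and_integral_max_sub_zero hZ hcdf hx).2,
    integral_max_sub_zero_eq hZ hZint, hGx, ← hsplit, hcompl]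
  ring
end

section
/- Fix γ ∈ (−∞, 1/2), γ ≠ 0 and let Z ~ G_γ. For x ≤ y in the support of G_γ, define ρ(x,y)² = ∫_0^1 ∫_ξ^1 [G_{γ,ξ'−ξ}(x,x) + G_{γ,ξ'−ξ}(y,y) − 2G_{γ,ξ'−ξ}(x,y)] dξ' dξ with G_{γ,η} as in the Marshall–Olkin-type bivariate GEV. Then, writing x̃ = (1+γx)^{-1/γ} ≥ ỹ = (1+γy)^{-1/γ}, ρ(x,y)² = (e^{-x̃}/x̃)(1 + (e^{-x̃}−1)/x̃) + (e^{-ỹ}/ỹ)(1 + (e^{-ỹ}−1)/ỹ) − 2(e^{-x̃}/ỹ)(1 + (e^{-ỹ}−1)/ỹ), and ρ(x,y) = 0 if and only if x = y. -/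
open Real MeasureTheory intervalIntegral

/-- The bivariate extreme-value distribution function `G_{γ,η}` (for `γ ≠ 0`). -/
noncomputable def gevBiv (γ η x y : ℝ) : ℝ :=
  Real.exp (-(η * (1 + γ * x) ^ (-1 / γ) + η * (1 + γ * y) ^ (-1 / γ) +
    (1 - η) * (1 + γ * min x y) ^ (-1 / γ)))

lemma hasDerivAt_exp_lin (c s t : ℝ) :
    HasDerivAt (fun u => Real.exp (c + s * u)) (s * Real.exp (c + s * t)) t := by
  have h := (((hasDerivAt_id t).const_mul s).const_add c).exp
  simpa [mul_comm] using h

lemma integral_exp_lin (c s : ℝ) (hs : s ≠ 0) (p q : ℝ) :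
    ∫ t in p..q, Real.exp (c + s * t) =
      (Real.exp (c + s * q) - Real.exp (c + s * p)) / s := by
  have h : ∀ t ∈ Set.uIcc p q,
      HasDerivAt (fun u => Real.exp (c + s * u) / s) (Real.exp (c + s * t)) t := by
    intro t _
    have := (hasDerivAt_exp_lin c s t).div_const s
    simpa [mul_div_assoc, mul_div_cancel_left₀ _ hs] using this
  rw [intervalIntegral.integral_eq_sub_of_hasDerivAt h
    ((Continuous.intervalIntegrable (by fun_prop) p q))]
  ring

lemma f_pos (A B η : ℝ) (hAB : B < A) (hη0 : 0 < η) (hη1 : η < 1) :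
    0 < Real.exp (-(A + η * A)) + Real.exp (-(B + η * B)) - 2 * Real.exp (-(A + η * B)) := by
  set X := Real.exp (-(A + η * A) / 2) with hX
  set Y := Real.exp (-(B + η * B) / 2) with hY
  have hXY : X < Y := by
    apply Real.exp_lt_exp.2
    nlinarith
  have h1 : Real.exp (-(A + η * A)) = X ^ 2 := by
    rw [hX, ← Real.exp_nat_mul]; norm_num; ring
  have h2 : Real.exp (-(B + η * B)) = Y ^ 2 := by
    rw [hY, ← Real.exp_nat_mul]; norm_num; ring
  have h3 : Real.exp (-(A + η * B)) ≤ X * Y := by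
    rw [hX, hY, ← Real.exp_add]
    apply Real.exp_le_exp.2
    nlinarith
  nlinarith [sq_nonneg (X - Y)]

/-- Explicit formula for
`ρ(x,y)² = ∫_0^1 ∫_ξ^1 [G_{γ,ξ'-ξ}(x,x) + G_{γ,ξ'-ξ}(y,y) - 2 G_{γ,ξ'-ξ}(x,y)] dξ' dξ`
in terms of `x̃ = (1+γx)^{-1/γ}` and `ỹ = (1+γy)^{-1/γ}`, together with the fact that
`ρ(x,y) = 0` iff `x = y`. -/
theorem rho_squared_formula (γ : ℝ) (hγ : γ < 1 / 2) (hγ0 : γ ≠ 0)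
    (x y : ℝ) (hxy : x ≤ y) (hx : 1 + γ * x > 0) (hy : 1 + γ * y > 0) :
    (∫ ξ in (0 : ℝ)..1, ∫ ξ' in ξ..1,
        (gevBiv γ (ξ' - ξ) x x + gevBiv γ (ξ' - ξ) y y - 2 * gevBiv γ (ξ' - ξ) x y)) =
      (Real.exp (-(1 + γ * x) ^ (-1 / γ)) / (1 + γ * x) ^ (-1 / γ)) *
          (1 + (Real.exp (-(1 + γ * x) ^ (-1 / γ)) - 1) / (1 + γ * x) ^ (-1 / γ)) +
        (Real.exp (-(1 + γ * y) ^ (-1 / γ)) / (1 + γ * y) ^ (-1 / γ)) *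
          (1 + (Real.exp (-(1 + γ * y) ^ (-1 / γ)) - 1) / (1 + γ * y) ^ (-1 / γ)) -
        2 * (Real.exp (-(1 + γ * x) ^ (-1 / γ)) / (1 + γ * y) ^ (-1 / γ)) *
          (1 + (Real.exp (-(1 + γ * y) ^ (-1 / γ)) - 1) / (1 + γ * y) ^ (-1 / γ)) ∧
    ((∫ ξ in (0 : ℝ)..1, ∫ ξ' in ξ..1,
        (gevBiv γ (ξ' - ξ) x x + gevBiv γ (ξ' - ξ) y y - 2 * gevBiv γ (ξ' - ξ) x y)) = 0 ↔
      x = y) := by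
  set A := (1 + γ * x) ^ (-1 / γ) with hA
  set B := (1 + γ * y) ^ (-1 / γ) with hB
  have hApos : 0 < A := Real.rpow_pos_of_pos hx _
  have hBpos : 0 < B := Real.rpow_pos_of_pos hy _
  have hA0 : A ≠ 0 := ne_of_gt hApos
  have hB0 : B ≠ 0 := ne_of_gt hBpos
  -- rewrite the integrand
  have hxx : ∀ η : ℝ, gevBiv γ η x x = Real.exp (-(A + η * A)) := by
    intro η; unfold gevBiv; rw [min_self, ← hA]; congr 1; ring
  have hyy : ∀ η : ℝ, gevBiv γ η y y = Real.exp (-(B + η * B)) := by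
    intro η; unfold gevBiv; rw [min_self, ← hB]; congr 1; ring
  have hxy' : ∀ η : ℝ, gevBiv γ η x y = Real.exp (-(A + η * B)) := by
    intro η; unfold gevBiv; rw [min_eq_left hxy, ← hA, ← hB]; congr 1; ring
  -- the inner integral
  have hin : ∀ ξ : ℝ, (∫ ξ' in ξ..1,
      (gevBiv γ (ξ' - ξ) x x + gevBiv γ (ξ' - ξ) y y - 2 * gevBiv γ (ξ' - ξ) x y)) =
      (Real.exp (-A) / A - Real.exp (-2*A + A*ξ) / A)
        + (Real.exp (-B) / B - Real.exp (-2*B + B*ξ) / B)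
        - 2 * (Real.exp (-A) / B - Real.exp (-A - B + B*ξ) / B) := by
    intro ξ
    have e1 : ∀ ξ' : ℝ, gevBiv γ (ξ' - ξ) x x = Real.exp ((-A + A*ξ) + (-A) * ξ') := by
      intro ξ'; rw [hxx]; congr 1; ring
    have e2 : ∀ ξ' : ℝ, gevBiv γ (ξ' - ξ) y y = Real.exp ((-B + B*ξ) + (-B) * ξ') := by
      intro ξ'; rw [hyy]; congr 1; ring
    have e3 : ∀ ξ' : ℝ, gevBiv γ (ξ' - ξ) x y = Real.exp ((-A + B*ξ) + (-B) * ξ') := by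
      intro ξ'; rw [hxy']; congr 1; ring
    simp only [e1, e2, e3]
    rw [intervalIntegral.integral_sub (((Continuous.intervalIntegrable (by fun_prop) _ _)).add
        ((Continuous.intervalIntegrable (by fun_prop) _ _)))
        (((Continuous.intervalIntegrable (by fun_prop) _ _)).const_mul 2),
      intervalIntegral.integral_add ((Continuous.intervalIntegrable (by fun_prop) _ _))
        ((Continuous.intervalIntegrable (by fun_prop) _ _)),
      intervalIntegral.integral_const_mul,
      integral_exp_lin _ _ (neg_ne_zero.2 hA0), integral_exp_lin _ _ (neg_ne_zero.2 hB0),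
      integral_exp_lin _ _ (neg_ne_zero.2 hB0)]
    have h1 : (-A + A*ξ) + -A * 1 = -2*A + A*ξ := by ring
    have h2 : (-A + A*ξ) + -A * ξ = -A := by ring
    have h3 : (-B + B*ξ) + -B * 1 = -2*B + B*ξ := by ring
    have h4 : (-B + B*ξ) + -B * ξ = -B := by ring
    have h5 : (-A + B*ξ) + -B * 1 = -A - B + B*ξ := by ring
    have h6 : (-A + B*ξ) + -B * ξ = -A := by ring
    rw [h1, h2, h3, h4, h5, h6]
    field_simp [hA0, hB0]
    ring
  -- main formula
  have hmain : (∫ ξ in (0 : ℝ)..1, ∫ ξ' in ξ..1,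
      (gevBiv γ (ξ' - ξ) x x + gevBiv γ (ξ' - ξ) y y - 2 * gevBiv γ (ξ' - ξ) x y)) =
      (Real.exp (-A) / A) * (1 + (Real.exp (-A) - 1) / A) +
        (Real.exp (-B) / B) * (1 + (Real.exp (-B) - 1) / B) -
        2 * (Real.exp (-A) / B) * (1 + (Real.exp (-B) - 1) / B) := by
    simp only [hin]
    rw [intervalIntegral.integral_sub (((Continuous.intervalIntegrable (by fun_prop) _ _)).add
        ((Continuous.intervalIntegrable (by fun_prop) _ _)))
        (((Continuous.intervalIntegrable (by fun_prop) _ _)).const_mul 2),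
      intervalIntegral.integral_add ((Continuous.intervalIntegrable (by fun_prop) _ _))
        ((Continuous.intervalIntegrable (by fun_prop) _ _)),
      intervalIntegral.integral_const_mul]
    have s1 : (∫ ξ in (0:ℝ)..1, (Real.exp (-A) / A - Real.exp (-2*A + A*ξ) / A)) =
        Real.exp (-A) / A - ((Real.exp (-2*A + A*1) - Real.exp (-2*A + A*0)) / A) / A := by
      rw [intervalIntegral.integral_sub (Continuous.intervalIntegrable (by fun_prop) _ _)
        (Continuous.intervalIntegrable (by fun_prop) _ _)]
      simp only [intervalIntegral.integral_div, integral_exp_lin _ _ hA0]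
      simp
    have s2 : (∫ ξ in (0:ℝ)..1, (Real.exp (-B) / B - Real.exp (-2*B + B*ξ) / B)) =
        Real.exp (-B) / B - ((Real.exp (-2*B + B*1) - Real.exp (-2*B + B*0)) / B) / B := by
      rw [intervalIntegral.integral_sub (Continuous.intervalIntegrable (by fun_prop) _ _)
        (Continuous.intervalIntegrable (by fun_prop) _ _)]
      simp only [intervalIntegral.integral_div, integral_exp_lin _ _ hB0]
      simp
    have s3 : (∫ ξ in (0:ℝ)..1, (Real.exp (-A) / B - Real.exp (-A - B + B*ξ) / B)) =
        Real.exp (-A) / B - ((Real.exp ((-A - B) + B*1) - Real.exp ((-A - B) + B*0)) / B) / B := by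
      rw [intervalIntegral.integral_sub (Continuous.intervalIntegrable (by fun_prop) _ _)
        (Continuous.intervalIntegrable (by fun_prop) _ _)]
      simp only [intervalIntegral.integral_div, show (fun ξ : ℝ => Real.exp (-A - B + B*ξ)) = fun ξ : ℝ => Real.exp ((-A - B) + B*ξ) from rfl,
        integral_exp_lin _ _ hB0]
      simp
    rw [s1, s2, s3]
    have e1 : Real.exp (-2*A + A*1) = Real.exp (-A) := by congr 1; ring
    have e2 : Real.exp (-2*A + A*0) = Real.exp (-A) * Real.exp (-A) := by
      rw [← Real.exp_add]; congr 1; ring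
    have e3 : Real.exp (-2*B + B*1) = Real.exp (-B) := by congr 1; ring
    have e4 : Real.exp (-2*B + B*0) = Real.exp (-B) * Real.exp (-B) := by
      rw [← Real.exp_add]; congr 1; ring
    have e5 : Real.exp ((-A - B) + B*1) = Real.exp (-A) := by congr 1; ring
    have e6 : Real.exp ((-A - B) + B*0) = Real.exp (-A) * Real.exp (-B) := by
      rw [← Real.exp_add]; congr 1; ring
    rw [e1, e2, e3, e4, e5, e6]
    field_simp
    ring
  refine ⟨hmain, ?_, ?_⟩
  · -- integral = 0 → x = y
    intro h
    by_contra hne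
    have hlt : x < y := lt_of_le_of_ne hxy hne
    have hBA : B < A := by
      rcases lt_or_gt_of_ne hγ0 with hneg | hpos
      · have hbase : 1 + γ * y < 1 + γ * x := by nlinarith
        have hexp : 0 < -1 / γ := by
          rw [div_pos_iff]; right; constructor <;> linarith
        exact Real.rpow_lt_rpow hy.le hbase hexp
      · have hbase : 1 + γ * x < 1 + γ * y := by nlinarith
        have hexp : -1 / γ < 0 := by
          rw [div_neg_iff]; right; constructor <;> linarith
        exact Real.rpow_lt_rpow_of_neg hx hbase hexp
    have hipos : ∀ ξ ∈ Set.Ioo (0:ℝ) 1, 0 < (Real.exp (-A) / A - Real.exp (-2*A + A*ξ) / A)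
        + (Real.exp (-B) / B - Real.exp (-2*B + B*ξ) / B)
        - 2 * (Real.exp (-A) / B - Real.exp (-A - B + B*ξ) / B) := by
      intro ξ hξ
      rw [← hin ξ]
      simp only [hxx, hyy, hxy']
      apply intervalIntegral_pos_of_pos_on (Continuous.intervalIntegrable (by fun_prop) _ _)
        _ hξ.2
      intro ξ' hξ'
      exact f_pos A B (ξ' - ξ) hBA (sub_pos.2 hξ'.1) (by cases hξ; cases hξ'; linarith)
    have hpos : 0 < ∫ ξ in (0:ℝ)..1, ∫ ξ' in ξ..1,
        (gevBiv γ (ξ' - ξ) x x + gevBiv γ (ξ' - ξ) y y - 2 * gevBiv γ (ξ' - ξ) x y) := by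
      simp only [hin]
      exact intervalIntegral_pos_of_pos_on (Continuous.intervalIntegrable (by fun_prop) _ _)
        hipos one_pos
    exact hpos.ne' h
  · -- x = y → integral = 0
    intro h
    subst h
    have hz : ∀ ξ ξ' : ℝ, gevBiv γ (ξ' - ξ) x x + gevBiv γ (ξ' - ξ) x x
        - 2 * gevBiv γ (ξ' - ξ) x x = 0 := by intro ξ ξ'; ring
    simp only [hz, intervalIntegral.integral_zero]
end
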